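/- arXiv:1604.01461 — 18 statements merged into one kernel-verified Lean document; each statement's English description precedes it below -/
import Mathlib

section
/- Let X be a finite-dimensional Banach space over 𝕜 (𝕜 = ℝ or ℂ) and let Y be any Banach space over 𝕜. Then the pair (X, Y) has the strong Bishop-Phelps-Bollobás property: for every ε > 0 and every bounded linear operator T : X → Y with ‖T‖ = 1 there exists η > 0 such that whenever x₀ ∈ X with ‖x₀‖ = 1 satisfies ‖T x₀‖ > 1 - η, there exists x₁ ∈ X with ‖x₁‖ = 1, ‖T x₁‖ = 1 and ‖x₁ - x₀‖ < ε. -/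
/-! On a compact set `K` where a continuous `f` is bounded by `M`, the points of `K` at distance
at least `ε` from the level set `{f = M}` form a compact set on which `f < M`, so `f` stays below
`M` by a uniform gap `η` there. Applied to `x ↦ ‖T x‖` on the unit sphere of `X`, compact since
`X` is finite-dimensional, this gives the required `η`. -/

open Metric Set

theorem IsCompact.exists_pos_forall_almost_max_near_max {α : Type*} [PseudoMetricSpace α]
    {K : Set α} (hK : IsCompact K) {f : α → ℝ} (hf : ContinuousOn f K) {M : ℝ}
    (hfM : ∀ x ∈ K, f x ≤ M) {ε : ℝ} (hε : 0 < ε) :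
    ∃ η > 0, ∀ x ∈ K, M - η < f x → ∃ y ∈ K, f y = M ∧ dist x y < ε := by
  set far := K \ thickening ε {y ∈ K | f y = M}
  have hfar : IsCompact far := hK.diff isOpen_thickening
  have hgap : ∀ x ∈ far, 0 < M - f x := fun x hx ↦ by
    refine sub_pos.2 <| (hfM x hx.1).lt_of_ne fun hxM ↦ hx.2 ?_
    exact self_subset_thickening hε _ ⟨hx.1, hxM⟩
  obtain ⟨η, hη, hηle⟩ :=
    hfar.exists_forall_le' (continuousOn_const.sub (hf.mono sdiff_subset)) hgap
  refine ⟨η, hη, fun x hxK hx ↦ ?_⟩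
  have hnear : x ∈ thickening ε {y ∈ K | f y = M} := by
    by_contra hxfar
    have := hηle x ⟨hxK, hxfar⟩
    simp only [Pi.sub_apply] at this
    linarith
  obtain ⟨y, ⟨hyK, hyM⟩, hxy⟩ := mem_thickening_iff.1 hnear
  exact ⟨y, hyK, hyM, hxy⟩

theorem finiteDimensional_sBPBp_general
    (𝕜 : Type*) [RCLike 𝕜]
    (X : Type*) [NormedAddCommGroup X] [NormedSpace 𝕜 X]
    [FiniteDimensional 𝕜 X]
    (Y : Type*) [NormedAddCommGroup Y] [NormedSpace 𝕜 Y] :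
    ∀ ε : ℝ, 0 < ε → ∀ T : X →L[𝕜] Y, ‖T‖ = 1 →
      ∃ η : ℝ, 0 < η ∧ ∀ x₀ : X, ‖x₀‖ = 1 → 1 - η < ‖T x₀‖ →
        ∃ x₁ : X, ‖x₁‖ = 1 ∧ ‖T x₁‖ = 1 ∧ ‖x₁ - x₀‖ < ε := by
  intro ε hε T hT
  have : ProperSpace X := FiniteDimensional.proper 𝕜 X
  have hTle : ∀ x ∈ sphere (0 : X) 1, ‖T x‖ ≤ 1 := fun x hx ↦ by
    simpa [hT, mem_sphere_zero_iff_norm.1 hx] using T.le_opNorm x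
  obtain ⟨η, hη, hnear⟩ := (isCompact_sphere (0 : X) 1).exists_pos_forall_almost_max_near_max
    (by fun_prop) hTle hε
  refine ⟨η, hη, fun x₀ hx₀ hTx₀ ↦ ?_⟩
  obtain ⟨x₁, hx₁, hTx₁, hdist⟩ := hnear x₀ (mem_sphere_zero_iff_norm.2 hx₀) hTx₀
  exact ⟨x₁, mem_sphere_zero_iff_norm.1 hx₁, hTx₁, by rwa [dist_comm, dist_eq_norm] at hdist⟩

/-- If `X` is a finite-dimensional Banach space over `𝕜` (`ℝ` or `ℂ`) and `Y` is
any Banach space over `𝕜`, then the pair `(X, Y)` has the strong Bishop-Phelps-Bollobás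
property. -/
theorem finiteDimensional_sBPBp
    (𝕜 : Type*) [RCLike 𝕜]
    (X : Type*) [NormedAddCommGroup X] [NormedSpace 𝕜 X] [CompleteSpace X]
    [FiniteDimensional 𝕜 X]
    (Y : Type*) [NormedAddCommGroup Y] [NormedSpace 𝕜 Y] [CompleteSpace Y] :
    ∀ ε : ℝ, 0 < ε → ∀ T : X →L[𝕜] Y, ‖T‖ = 1 →
      ∃ η : ℝ, 0 < η ∧ ∀ x₀ : X, ‖x₀‖ = 1 → 1 - η < ‖T x₀‖ →
        ∃ x₁ : X, ‖x₁‖ = 1 ∧ ‖T x₁‖ = 1 ∧ ‖x₁ - x₀‖ < ε :=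
  finiteDimensional_sBPBp_general 𝕜 X Y
end

section
/- Let X be a uniformly convex Banach space and Y any Banach space (over ℝ, or over ℂ regarded as real normed spaces for uniform convexity). Then the pair (X, Y) has the strong Bishop-Phelps-Bollobás property for compact operators: for every ε > 0 and every compact bounded linear operator T : X → Y with ‖T‖ = 1 there exists η > 0 such that whenever x₀ ∈ X with ‖x₀‖ = 1 satisfies ‖T x₀‖ > 1 - η, there exists x₁ ∈ X with ‖x₁‖ = 1, ‖T x₁‖ = 1 and ‖x₁ - x₀‖ < ε. -/
/-!
If `‖T uₙ‖ → 1` along unit vectors `uₙ`, compactness gives a subsequence with `T uₙ → y`, and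
`‖y‖ = 1`. Then `‖uₘ + uₙ‖ ≥ ‖T uₘ + T uₙ‖ → 2`, so by uniform convexity the subsequence is Cauchy;
its limit `x` is a unit vector with `‖T x‖ = 1`. Hence if no `η` worked, the points `x₀` witnessing
this for `η = 1/(n+1)` would have a subsequence converging to such an `x`, although all of them
stay `ε`-far from every norm-attaining unit vector.
-/

open Filter Topology

theorem cauchySeq_of_norm_add_tendsto_two {X ι : Type*} [SeminormedAddCommGroup X]
    [UniformConvexSpace X] [Nonempty ι] [SemilatticeSup ι] {v : ι → X} (hv : ∀ i, ‖v i‖ = 1)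
    (h : Tendsto (fun p : ι × ι => ‖v p.1 + v p.2‖) atTop (𝓝 2)) : CauchySeq v := by
  rw [cauchySeq_iff_tendsto_dist_atTop_0, Metric.tendsto_nhds]
  intro ε hε
  obtain ⟨δ, hδ, hconvex⟩ := UniformConvexSpace.uniform_convex (E := X) hε
  filter_upwards [h.eventually (lt_mem_nhds (sub_lt_self 2 hδ))] with p hp
  rw [Real.dist_0_eq_abs, abs_of_nonneg dist_nonneg, dist_eq_norm]
  by_contra! hfar
  exact (hconvex (hv p.1) (hv p.2) hfar).not_gt hp

theorem ContinuousLinearMap.cauchySeq_of_tendsto_apply_of_opNorm_le_one {𝕜 X Y ι : Type*}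
    [RCLike 𝕜] [SeminormedAddCommGroup X] [NormedSpace 𝕜 X]
    [UniformConvexSpace X] [SeminormedAddCommGroup Y] [NormedSpace 𝕜 Y]
    [Nonempty ι] [SemilatticeSup ι] {T : X →L[𝕜] Y} (hT : ‖T‖ ≤ 1) {v : ι → X}
    (hv : ∀ i, ‖v i‖ = 1) {y : Y} (hy : ‖y‖ = 1) (hTv : Tendsto (fun i => T (v i)) atTop (𝓝 y)) :
    CauchySeq v := by
  refine cauchySeq_of_norm_add_tendsto_two hv ?_
  have hlim : Tendsto (fun p : ι × ι => ‖T (v p.1 + v p.2)‖) atTop (𝓝 2) := by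
    have := ((hTv.comp tendsto_fst).add (hTv.comp tendsto_snd)).norm
    rw [← two_smul 𝕜 y, norm_smul, hy, mul_one, RCLike.norm_ofNat, prod_atTop_atTop_eq] at this
    simpa only [map_add, Function.comp_apply] using this
  refine tendsto_of_tendsto_of_tendsto_of_le_of_le hlim tendsto_const_nhds (fun p => ?_) fun p => ?_
  · exact (T.le_of_opNorm_le hT _).trans_eq (one_mul _)
  · calc ‖v p.1 + v p.2‖ ≤ ‖v p.1‖ + ‖v p.2‖ := norm_add_le _ _
      _ = 2 := by rw [hv, hv]; norm_num

theorem IsCompactOperator.exists_strictMono_tendsto_apply {𝕜 X Y : Type*}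
    [NontriviallyNormedField 𝕜] [SeminormedAddCommGroup X] [NormedSpace 𝕜 X]
    [SeminormedAddCommGroup Y] [NormedSpace 𝕜 Y] {T : X →L[𝕜] Y} (hT : IsCompactOperator T)
    {u : ℕ → X} {r : ℝ} (hu : ∀ n, ‖u n‖ ≤ r) :
    ∃ y : Y, ∃ φ : ℕ → ℕ, StrictMono φ ∧ Tendsto (fun n => T (u (φ n))) atTop (𝓝 y) := by
  obtain ⟨K, hK, hTK⟩ := hT.image_closedBall_subset_compact (f := (T : X →ₗ[𝕜] Y)) r
  obtain ⟨y, -, φ, hφ, hlim⟩ :=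
    hK.isSeqCompact fun n => hTK ⟨u n, mem_closedBall_zero_iff.2 (hu n), rfl⟩
  exact ⟨y, φ, hφ, hlim⟩

theorem IsCompactOperator.exists_norm_apply_eq_one_tendsto_subseq {𝕜 X Y : Type*} [RCLike 𝕜]
    [NormedAddCommGroup X] [NormedSpace 𝕜 X] [CompleteSpace X] [UniformConvexSpace X]
    [NormedAddCommGroup Y] [NormedSpace 𝕜 Y] {T : X →L[𝕜] Y} (hT : IsCompactOperator T)
    (hT1 : ‖T‖ ≤ 1) {u : ℕ → X} (hu : ∀ n, ‖u n‖ = 1)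
    (hTu : Tendsto (fun n => ‖T (u n)‖) atTop (𝓝 1)) :
    ∃ x : X, ‖x‖ = 1 ∧ ‖T x‖ = 1 ∧
      ∃ φ : ℕ → ℕ, StrictMono φ ∧ Tendsto (fun n => u (φ n)) atTop (𝓝 x) := by
  obtain ⟨y, φ, hφ, hy⟩ := hT.exists_strictMono_tendsto_apply fun n => (hu n).le
  have hy1 : ‖y‖ = 1 := tendsto_nhds_unique hy.norm (hTu.comp hφ.tendsto_atTop)
  obtain ⟨x, hx⟩ := cauchySeq_tendsto_of_complete <|
    T.cauchySeq_of_tendsto_apply_of_opNorm_le_one hT1 (fun n => hu (φ n)) hy1 hy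
  refine ⟨x, tendsto_nhds_unique hx.norm ?_, ?_, φ, hφ, hx⟩
  · simpa only [hu] using tendsto_const_nhds
  · rw [tendsto_nhds_unique ((T.continuous.tendsto x).comp hx) hy, hy1]

theorem uniformConvex_sBPBp_compact_general
    (𝕜 : Type*) [RCLike 𝕜]
    (X : Type*) [NormedAddCommGroup X] [NormedSpace 𝕜 X] [CompleteSpace X]
    [UniformConvexSpace X]
    (Y : Type*) [NormedAddCommGroup Y] [NormedSpace 𝕜 Y] :
    ∀ ε : ℝ, 0 < ε → ∀ T : X →L[𝕜] Y, IsCompactOperator T → ‖T‖ = 1 →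
      ∃ η : ℝ, 0 < η ∧ ∀ x₀ : X, ‖x₀‖ = 1 → 1 - η < ‖T x₀‖ →
        ∃ x₁ : X, ‖x₁‖ = 1 ∧ ‖T x₁‖ = 1 ∧ ‖x₁ - x₀‖ < ε := by
  intro ε hε T hTc hT1
  by_contra! hcon
  choose u hu hTu hfar using fun n : ℕ => hcon (1 / (n + 1)) Nat.one_div_pos_of_nat
  have hTu_lim : Tendsto (fun n => ‖T (u n)‖) atTop (𝓝 1) := by
    refine tendsto_of_tendsto_of_tendsto_of_le_of_le ?_ tendsto_const_nhds
      (fun n => (hTu n).le) fun n => ?_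
    · simpa using tendsto_const_nhds.sub (tendsto_one_div_add_atTop_nhds_zero_nat (𝕜 := ℝ))
    · exact (T.le_of_opNorm_le hT1.le _).trans_eq (by rw [hu, one_mul])
  obtain ⟨x, hx, hTx, φ, -, hlim⟩ := hTc.exists_norm_apply_eq_one_tendsto_subseq hT1.le hu hTu_lim
  obtain ⟨n, hn⟩ := ((tendsto_iff_norm_sub_tendsto_zero.1 hlim).eventually (gt_mem_nhds hε)).exists
  exact (hfar (φ n) x hx hTx).not_gt (by rwa [norm_sub_rev])

/-- If `X` is a uniformly convex Banach space and `Y` is any Banach space, then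
the pair `(X, Y)` has the strong Bishop-Phelps-Bollobás property for compact operators. -/
theorem uniformConvex_sBPBp_compact
    (𝕜 : Type*) [RCLike 𝕜]
    (X : Type*) [NormedAddCommGroup X] [NormedSpace 𝕜 X] [CompleteSpace X]
    [UniformConvexSpace X]
    (Y : Type*) [NormedAddCommGroup Y] [NormedSpace 𝕜 Y] [CompleteSpace Y] :
    ∀ ε : ℝ, 0 < ε → ∀ T : X →L[𝕜] Y, IsCompactOperator T → ‖T‖ = 1 →
      ∃ η : ℝ, 0 < η ∧ ∀ x₀ : X, ‖x₀‖ = 1 → 1 - η < ‖T x₀‖ →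
        ∃ x₁ : X, ‖x₁‖ = 1 ∧ ‖T x₁‖ = 1 ∧ ‖x₁ - x₀‖ < ε :=
  uniformConvex_sBPBp_compact_general 𝕜 X Y
end

section
/- Let X be a uniformly convex Banach space and let Y be a Banach space with the Schur property (every weakly convergent sequence in Y converges in norm). Then the pair (X, Y) has the strong Bishop-Phelps-Bollobás property: for every ε > 0 and every bounded linear operator T : X → Y with ‖T‖ = 1 there exists η > 0 such that whenever x₀ ∈ X with ‖x₀‖ = 1 satisfies ‖T x₀‖ > 1 - η, there exists x₁ ∈ X with ‖x₁‖ = 1, ‖T x₁‖ = 1 and ‖x₁ - x₀‖ < ε. -/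
/-!
If the claim fails, there are unit vectors `xₖ` with `‖T xₖ‖ → 1`, each at distance at least `ε`
from every norm-attaining unit vector. A subsequence converges weakly to some `v`, so by the Schur
property `T xₖ → T v` in norm. Then `‖T v‖ = 1 = ‖v‖` and `‖xₖ + v‖ ≥ ‖T xₖ + T v‖ → 2`, so uniform
convexity forces `xₖ → v` in norm: a contradiction.

Weak sequential compactness of the unit ball is obtained without reflexivity. In a uniformly
convex Banach space, nested bounded closed convex sets have a common point, because near-minimal
norm points of the sets form a Cauchy sequence. A diagonal argument over countably many norming
functionals of the separable closed span of the sequence makes the intersection of the closed convex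
hulls of the tails of a subsequence a single point, and that point is the weak limit.
-/

open Set Metric Filter Topology

section UniformConvexity

variable {X : Type*} [NormedAddCommGroup X] [NormedSpace ℝ X] [UniformConvexSpace X]

lemma exists_forall_norm_add_le_two_mul_max_sub {ε R : ℝ} (hε : 0 < ε) (hR : 0 < R) :
    ∃ δ > 0, ∀ ⦃x y : X⦄, ‖x‖ ≤ R → ‖y‖ ≤ R → ε ≤ ‖x - y‖ →
      ‖x + y‖ ≤ 2 * max ‖x‖ ‖y‖ - δ := by
  obtain ⟨δ, hδ, h⟩ := exists_forall_closed_ball_dist_add_le_two_sub X (div_pos hε hR)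
  refine ⟨ε / 2 * δ, by positivity, fun x y hx hy hxy => ?_⟩
  set r := max ‖x‖ ‖y‖
  have hxr : ‖x‖ ≤ r := le_max_left _ _
  have hyr : ‖y‖ ≤ r := le_max_right _ _
  have hεr : ε / 2 ≤ r := by linarith [norm_sub_le x y]
  have hr : 0 < r := by linarith
  have hscale : ∀ z : X, ‖r⁻¹ • z‖ = ‖z‖ / r := fun z => by
    rw [norm_smul, Real.norm_of_nonneg (inv_nonneg.2 hr.le), inv_mul_eq_div]
  have hsum := h (x := r⁻¹ • x) (y := r⁻¹ • y)
    (by rw [hscale]; exact div_le_one_of_le₀ hxr hr.le)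
    (by rw [hscale]; exact div_le_one_of_le₀ hyr hr.le)
    (by
      rw [← smul_sub, hscale]
      calc ε / R ≤ ε / r := div_le_div_of_nonneg_left hε.le hr (max_le hx hy)
        _ ≤ ‖x - y‖ / r := div_le_div_of_nonneg_right hxy hr.le)
  rw [← smul_add, hscale, div_le_iff₀ hr] at hsum
  nlinarith

lemma cauchySeq_of_le_norm_add {p : ℕ → X} {R : ℝ} (hR : 0 < R) (hp : ∀ n, ‖p n‖ ≤ R)
    {e : ℕ → ℝ} (he : Tendsto e atTop (𝓝 0))
    (h : ∀ m n, m ≤ n → 2 * (max ‖p m‖ ‖p n‖ - e m) ≤ ‖p m + p n‖) : CauchySeq p := by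
  refine Metric.cauchySeq_iff'.2 fun ε hε => ?_
  obtain ⟨δ, hδ, hUC⟩ := exists_forall_norm_add_le_two_mul_max_sub (X := X) hε hR
  obtain ⟨N, hN⟩ := (he.eventually (gt_mem_nhds (half_pos hδ))).exists
  refine ⟨N, fun n hn => ?_⟩
  rw [dist_eq_norm, norm_sub_rev]
  by_contra! hle
  linarith [hUC (hp N) (hp n) hle, h N n hn]

lemma tendsto_of_tendsto_norm_add_two {ι : Type*} {l : Filter ι} {u : ι → X} {v : X}
    (hu : ∀ i, ‖u i‖ ≤ 1) (hv : ‖v‖ ≤ 1) (h : Tendsto (fun i => ‖u i + v‖) l (𝓝 2)) :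
    Tendsto u l (𝓝 v) := by
  refine Metric.tendsto_nhds.2 fun ε hε => ?_
  obtain ⟨δ, hδ, hUC⟩ := exists_forall_closed_ball_dist_add_le_two_sub X hε
  filter_upwards [h.eventually (lt_mem_nhds (by linarith : 2 - δ < 2))] with i hi
  rw [dist_eq_norm]
  by_contra! hle
  linarith [hUC (hu i) hv hle]

variable [CompleteSpace X]

-- Šmulian: this nested-intersection property characterises reflexive Banach spaces.
theorem Antitone.iInter_nonempty_of_isClosed_of_convex {K : ℕ → Set X} (hanti : Antitone K)
    (hne : ∀ n, (K n).Nonempty) (hcl : ∀ n, IsClosed (K n)) (hconv : ∀ n, Convex ℝ (K n))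
    (hbdd : Bornology.IsBounded (K 0)) : (⋂ n, K n).Nonempty := by
  obtain ⟨R, hR, hRK⟩ := hbdd.exists_pos_norm_le
  set d : ℕ → ℝ := fun n => infDist 0 (K n)
  have hd_mono : Monotone d := fun m n hmn => infDist_le_infDist_of_subset (hanti hmn) (hne n)
  have hdR : ∀ n, d n ≤ R := fun n => by
    obtain ⟨x, hx⟩ := hne n
    exact (infDist_le_dist_of_mem hx).trans
      ((dist_zero_left x).trans_le (hRK x (hanti n.zero_le hx)))
  set D := ⨆ n, d n
  have hdD : ∀ n, d n ≤ D := le_ciSup ⟨R, forall_mem_range.2 hdR⟩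
  have hd_tendsto : Tendsto d atTop (𝓝 D) :=
    tendsto_atTop_ciSup hd_mono ⟨R, forall_mem_range.2 hdR⟩
  have hgap (n : ℕ) : d n < d n + 1 / (n + 1) := lt_add_of_pos_right _ Nat.one_div_pos_of_nat
  choose p hpK hp using fun n => (infDist_lt_iff (hne n)).1 (hgap n)
  simp only [dist_zero_left] at hp
  -- the midpoint of `p m` and `p n` lies in `K m`, so it is not much shorter than `p m` and `p n`
  have hmid : ∀ m n, m ≤ n → 2 * (max ‖p m‖ ‖p n‖ - (D - d m + 1 / (m + 1))) ≤ ‖p m + p n‖ := by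
    intro m n hmn
    have hmem : (1 / 2 : ℝ) • p m + (1 / 2 : ℝ) • p n ∈ K m :=
      hconv m (hpK m) (hanti hmn (hpK n)) (by norm_num) (by norm_num) (by norm_num)
    have hdm := infDist_le_dist_of_mem (x := 0) hmem
    rw [dist_zero_left, ← smul_add, norm_smul, Real.norm_of_nonneg (by norm_num)] at hdm
    have hn : 1 / ((n : ℝ) + 1) ≤ 1 / (m + 1) := Nat.one_div_le_one_div hmn
    have hmax : max ‖p m‖ ‖p n‖ ≤ D + 1 / (m + 1) :=
      max_le (by linarith [hp m, hdD m]) (by linarith [hp n, hdD n])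
    linarith
  have hcauchy : CauchySeq p := by
    refine cauchySeq_of_le_norm_add hR (fun n => hRK _ (hanti n.zero_le (hpK n))) ?_ hmid
    simpa using ((tendsto_const_nhds (x := D)).sub hd_tendsto).add
      tendsto_one_div_add_atTop_nhds_zero_nat
  obtain ⟨q, hq⟩ := cauchySeq_tendsto_of_complete hcauchy
  exact ⟨q, mem_iInter.2 fun n => (hcl n).mem_of_tendsto hq
    (eventually_atTop.2 ⟨n, fun k hk => hanti hk (hpK k)⟩)⟩

end UniformConvexity

section AsymptoticHull

variable {X : Type*} [NormedAddCommGroup X] [NormedSpace ℝ X]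

/-- By Mazur's lemma this set contains every weak cluster point of `u`. -/
def asymptoticHull (u : ℕ → X) : Set X := ⋂ m, closure (convexHull ℝ (u '' Ici m))

lemma asymptoticHull_subset_of_eventually_mem {u : ℕ → X} {s : Set X} (hs : IsClosed s)
    (hconv : Convex ℝ s) (h : ∀ᶠ n in atTop, u n ∈ s) : asymptoticHull u ⊆ s := by
  obtain ⟨m, hm⟩ := eventually_atTop.1 h
  exact (iInter_subset _ m).trans
    (closure_minimal (convexHull_min (image_subset_iff.2 hm) hconv) hs)

lemma asymptoticHull_comp_subset (u : ℕ → X) {ns : ℕ → ℕ} (hns : Tendsto ns atTop atTop) :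
    asymptoticHull (u ∘ ns) ⊆ asymptoticHull u :=
  subset_iInter fun m => asymptoticHull_subset_of_eventually_mem isClosed_closure
    (convex_convexHull ℝ _).closure ((hns.eventually_ge_atTop m).mono fun _ hk =>
      subset_closure (subset_convexHull ℝ _ ⟨_, hk, rfl⟩))

lemma asymptoticHull_subset_topologicalClosure_span (u : ℕ → X) :
    asymptoticHull u ⊆ (Submodule.span ℝ (range u)).topologicalClosure :=
  asymptoticHull_subset_of_eventually_mem (Submodule.isClosed_topologicalClosure _)
    (Submodule.convex _) (Eventually.of_forall fun n =>
      Submodule.le_topologicalClosure _ (Submodule.subset_span (mem_range_self n)))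

lemma map_eq_of_mem_asymptoticHull {F : Type*} [NormedAddCommGroup F] [NormedSpace ℝ F]
    (f : X →L[ℝ] F) {u : ℕ → X} {c : F} (hf : Tendsto (fun n => f (u n)) atTop (𝓝 c))
    {w : X} (hw : w ∈ asymptoticHull u) : f w = c :=
  eq_of_forall_dist_le fun r hr => asymptoticHull_subset_of_eventually_mem
    (isClosed_closedBall.preimage f.continuous)
    ((convex_closedBall c r).linear_preimage (f : X →ₗ[ℝ] F))
    (hf (closedBall_mem_nhds c hr)) hw

lemma asymptoticHull_nonempty [UniformConvexSpace X] [CompleteSpace X] {u : ℕ → X}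
    (hu : Bornology.IsBounded (range u)) : (asymptoticHull u).Nonempty :=
  Antitone.iInter_nonempty_of_isClosed_of_convex
    (fun _ _ hmn => closure_mono (convexHull_mono (image_mono (Ici_subset_Ici.2 hmn))))
    (fun n => ⟨u n, subset_closure (subset_convexHull ℝ _ ⟨n, self_mem_Ici, rfl⟩)⟩)
    (fun _ => isClosed_closure) (fun _ => (convex_convexHull ℝ _).closure)
    ((isBounded_convexHull.2 hu).closure.subset
      (closure_mono (convexHull_mono (image_subset_range u _))))

end AsymptoticHull

section WeakCompactness

variable {X : Type*} [NormedAddCommGroup X] [NormedSpace ℝ X]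

lemma eq_zero_of_mem_closure_of_norming {θ : X → StrongDual ℝ X} (hθ : ∀ z, ‖θ z‖ ≤ 1)
    (hθz : ∀ z, θ z z = ‖z‖) {c : Set X} {y : X} (hy : y ∈ closure c)
    (h : ∀ z ∈ c, θ z y = 0) : y = 0 := by
  have hnear : ∀ z ∈ c, ‖y‖ ≤ 2 * ‖y - z‖ := fun z hz => by
    have : ‖z‖ ≤ ‖y - z‖ :=
      calc ‖z‖ = θ z (z - y) := by rw [map_sub, h z hz, hθz, sub_zero]
        _ ≤ ‖θ z‖ * ‖z - y‖ := (le_abs_self _).trans ((θ z).le_opNorm _)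
        _ ≤ ‖y - z‖ := by rw [norm_sub_rev]; exact mul_le_of_le_one_left (norm_nonneg _) (hθ z)
    linarith [norm_le_norm_sub_add y z]
  refine norm_le_zero_iff.1 (le_of_forall_pos_le_add fun ε hε => ?_)
  obtain ⟨z, hz, hyz⟩ := mem_closure_iff.1 hy (ε / 2) (half_pos hε)
  linarith [hnear z hz, dist_eq_norm y z]

lemma exists_subseq_asymptoticHull_subsingleton {u : ℕ → X}
    (hu : Bornology.IsBounded (range u)) :
    ∃ φ : ℕ → ℕ, StrictMono φ ∧ (asymptoticHull (u ∘ φ)).Subsingleton := by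
  obtain ⟨R, hR⟩ := isBounded_iff_forall_norm_le.1 hu
  choose θ hθ hθz using fun z : X => exists_dual_vector'' ℝ z
  obtain ⟨c, hc, hSc⟩ := ((countable_range u).isSeparable.span (R := ℝ)).closure
  have := hc.to_subtype
  -- diagonal extraction, via compactness of a countable product of balls
  have hball : ∀ n, (fun z : c => θ z (u n)) ∈ univ.pi fun _ => closedBall (0 : ℝ) R :=
    fun n => mem_univ_pi.2 fun z => mem_closedBall_zero_iff.2 <|
      ((θ z).le_opNorm _).trans <| (mul_le_mul (hθ z) (hR _ (mem_range_self n)) (norm_nonneg _)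
        zero_le_one).trans_eq (one_mul R)
  obtain ⟨a, -, φ, hφ, ha⟩ :=
    (isCompact_univ_pi fun _ => isCompact_closedBall (0 : ℝ) R).tendsto_subseq hball
  have hθa : ∀ w ∈ asymptoticHull (u ∘ φ), ∀ z : c, θ z w = a z := fun w hw z =>
    map_eq_of_mem_asymptoticHull (θ z) (tendsto_pi_nhds.1 ha z) hw
  have hS : asymptoticHull (u ∘ φ) ⊆ (Submodule.span ℝ (range u)).topologicalClosure :=
    (asymptoticHull_comp_subset u hφ.tendsto_atTop).trans
      (asymptoticHull_subset_topologicalClosure_span u)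
  refine ⟨φ, hφ, fun w hw w' hw' => sub_eq_zero.1 ?_⟩
  refine eq_zero_of_mem_closure_of_norming hθ (by simpa using hθz)
    (hSc (Submodule.sub_mem _ (hS hw) (hS hw'))) fun z hz => ?_
  rw [map_sub, hθa w hw ⟨z, hz⟩, hθa w' hw' ⟨z, hz⟩, sub_self]

variable [CompleteSpace X] [UniformConvexSpace X]

lemma tendsto_map_of_asymptoticHull_subsingleton {F : Type*} [NormedAddCommGroup F]
    [NormedSpace ℝ F] [ProperSpace F] {u : ℕ → X} (hu : Bornology.IsBounded (range u))
    (hsub : (asymptoticHull u).Subsingleton) {v : X} (hv : v ∈ asymptoticHull u)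
    (f : X →L[ℝ] F) : Tendsto (fun n => f (u n)) atTop (𝓝 (f v)) := by
  refine tendsto_of_subseq_tendsto fun ns hns => ?_
  obtain ⟨β, -, ms, hms, hβ⟩ := tendsto_subseq_of_bounded (f.lipschitz.isBounded_image hu)
    (x := fun k => f (u (ns k))) fun k => mem_image_of_mem f (mem_range_self _)
  obtain ⟨w, hw⟩ := asymptoticHull_nonempty (u := u ∘ (ns ∘ ms))
    (hu.subset (range_comp_subset_range _ _))
  have hwv : w = v := hsub (asymptoticHull_comp_subset u (hns.comp hms.tendsto_atTop) hw) hv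
  refine ⟨ms, ?_⟩
  rw [← hwv, map_eq_of_mem_asymptoticHull f hβ hw]
  exact hβ

end WeakCompactness

theorem exists_subseq_tendsto_of_norm_apply_tendsto_one {𝕜 X Y : Type*} [RCLike 𝕜]
    [NormedAddCommGroup X] [NormedSpace ℝ X] [NormedSpace 𝕜 X] [IsScalarTower ℝ 𝕜 X]
    [CompleteSpace X] [UniformConvexSpace X] [NormedAddCommGroup Y] [NormedSpace 𝕜 Y]
    (schur : ∀ (y : ℕ → Y) (y₀ : Y),
      (∀ f : Y →L[𝕜] 𝕜, Tendsto (fun n => f (y n)) atTop (𝓝 (f y₀))) → Tendsto y atTop (𝓝 y₀))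
    {T : X →L[𝕜] Y} (hT : ‖T‖ ≤ 1) {x : ℕ → X} (hx : ∀ n, ‖x n‖ ≤ 1)
    (hTx : Tendsto (fun n => ‖T (x n)‖) atTop (𝓝 1)) :
    ∃ v : X, ‖v‖ = 1 ∧ ‖T v‖ = 1 ∧
      ∃ φ : ℕ → ℕ, StrictMono φ ∧ Tendsto (fun n => x (φ n)) atTop (𝓝 v) := by
  have hbdd : Bornology.IsBounded (range x) :=
    isBounded_iff_forall_norm_le.2 ⟨1, forall_mem_range.2 hx⟩
  obtain ⟨φ, hφ, hsub⟩ := exists_subseq_asymptoticHull_subsingleton hbdd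
  have hbddφ := hbdd.subset (range_comp_subset_range φ x)
  obtain ⟨v, hv⟩ := asymptoticHull_nonempty hbddφ
  have hTv : Tendsto (fun n => T (x (φ n))) atTop (𝓝 (T v)) := schur _ _ fun f =>
    tendsto_map_of_asymptoticHull_subsingleton hbddφ hsub hv ((f.comp T).restrictScalars ℝ)
  have hTv1 : ‖T v‖ = 1 := tendsto_nhds_unique hTv.norm (hTx.comp hφ.tendsto_atTop)
  have hv1 : ‖v‖ ≤ 1 := mem_closedBall_zero_iff.1 <|
    asymptoticHull_subset_of_eventually_mem isClosed_closedBall (convex_closedBall 0 1)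
      (Eventually.of_forall fun n => mem_closedBall_zero_iff.2 (hx _)) hv
  have hT_le : ∀ z, ‖T z‖ ≤ ‖z‖ := fun z => (T.le_of_opNorm_le hT z).trans_eq (one_mul _)
  refine ⟨v, hv1.antisymm (hTv1 ▸ hT_le v), hTv1, φ, hφ,
    tendsto_of_tendsto_norm_add_two (fun n => hx _) hv1 ?_⟩
  -- `‖x (φ n) + v‖` is squeezed between `‖T (x (φ n)) + T v‖ → ‖2 • T v‖ = 2` and `2`
  have hTsum : Tendsto (fun n => ‖T (x (φ n)) + T v‖) atTop (𝓝 2) := by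
    have := (hTv.add (tendsto_const_nhds (x := T v))).norm
    rwa [← two_smul 𝕜 (T v), norm_smul, hTv1, mul_one, RCLike.norm_two] at this
  refine tendsto_of_tendsto_of_tendsto_of_le_of_le hTsum tendsto_const_nhds (fun n => ?_)
    fun n => (norm_add_le _ _).trans (by linarith [hx (φ n)])
  simpa only [map_add] using hT_le (x (φ n) + v)

theorem uniformConvex_schur_sBPBp_general
    (𝕜 : Type*) [RCLike 𝕜]
    (X : Type*) [NormedAddCommGroup X] [NormedSpace 𝕜 X] [CompleteSpace X]
    [UniformConvexSpace X]
    (Y : Type*) [NormedAddCommGroup Y] [NormedSpace 𝕜 Y]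
    (schur : ∀ (y : ℕ → Y) (y₀ : Y),
      (∀ f : Y →L[𝕜] 𝕜, Filter.Tendsto (fun n => f (y n)) Filter.atTop (nhds (f y₀))) →
      Filter.Tendsto y Filter.atTop (nhds y₀)) :
    ∀ ε : ℝ, 0 < ε → ∀ T : X →L[𝕜] Y, ‖T‖ = 1 →
      ∃ η : ℝ, 0 < η ∧ ∀ x₀ : X, ‖x₀‖ = 1 → 1 - η < ‖T x₀‖ →
        ∃ x₁ : X, ‖x₁‖ = 1 ∧ ‖T x₁‖ = 1 ∧ ‖x₁ - x₀‖ < ε := by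
  intro ε hε T hT
  let _ : NormedSpace ℝ X := NormedSpace.restrictScalars ℝ 𝕜 X
  by_contra! hcon
  choose x hx hTx hfar using fun k : ℕ => hcon (1 / (k + 1)) Nat.one_div_pos_of_nat
  have hTx_le : ∀ k, ‖T (x k)‖ ≤ 1 := fun k =>
    (T.le_opNorm (x k)).trans_eq (by rw [hT, hx, one_mul])
  have hTx_tendsto : Tendsto (fun k => ‖T (x k)‖) atTop (𝓝 1) := by
    refine tendsto_of_tendsto_of_tendsto_of_le_of_le ?_ tendsto_const_nhds (fun k => (hTx k).le)
      hTx_le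
    simpa using (tendsto_const_nhds (x := (1 : ℝ))).sub tendsto_one_div_add_atTop_nhds_zero_nat
  obtain ⟨v, hv, hTv, φ, -, hφ⟩ :=
    exists_subseq_tendsto_of_norm_apply_tendsto_one schur hT.le (fun k => (hx k).le) hTx_tendsto
  obtain ⟨n, hn⟩ := (hφ.eventually (ball_mem_nhds v hε)).exists
  rw [dist_comm, dist_eq_norm] at hn
  exact (hfar _ v hv hTv).not_gt hn

/-- If `X` is a uniformly convex Banach space and `Y` is a Banach space with the
Schur property (every weakly convergent sequence converges in norm), then the pair `(X, Y)`
has the strong Bishop-Phelps-Bollobás property. -/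
theorem uniformConvex_schur_sBPBp
    (𝕜 : Type*) [RCLike 𝕜]
    (X : Type*) [NormedAddCommGroup X] [NormedSpace 𝕜 X] [CompleteSpace X]
    [UniformConvexSpace X]
    (Y : Type*) [NormedAddCommGroup Y] [NormedSpace 𝕜 Y] [CompleteSpace Y]
    (schur : ∀ (y : ℕ → Y) (y₀ : Y),
      (∀ f : Y →L[𝕜] 𝕜, Filter.Tendsto (fun n => f (y n)) Filter.atTop (nhds (f y₀))) →
      Filter.Tendsto y Filter.atTop (nhds y₀)) :
    ∀ ε : ℝ, 0 < ε → ∀ T : X →L[𝕜] Y, ‖T‖ = 1 →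
      ∃ η : ℝ, 0 < η ∧ ∀ x₀ : X, ‖x₀‖ = 1 → 1 - η < ‖T x₀‖ →
        ∃ x₁ : X, ‖x₁‖ = 1 ∧ ‖T x₁‖ = 1 ∧ ‖x₁ - x₀‖ < ε :=
  uniformConvex_schur_sBPBp_general 𝕜 X Y schur
end

section
/- Let X be a uniformly convex Banach space and let Y be a finite-dimensional Banach space. Then the pair (X, Y) has the strong Bishop-Phelps-Bollobás property: for every ε > 0 and every bounded linear operator T : X → Y with ‖T‖ = 1 there exists η > 0 such that whenever x₀ ∈ X with ‖x₀‖ = 1 satisfies ‖T x₀‖ > 1 - η, there exists x₁ ∈ X with ‖x₁‖ = 1, ‖T x₁‖ = 1 and ‖x₁ - x₀‖ < ε. -/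
/-!
Argue by contradiction: take unit vectors `xₙ` with `‖T xₙ‖ → 1` that stay `ε` away from every
norm-attaining unit vector. Since `Y` is finite-dimensional, a subsequence of `T xₙ` converges to
some `y` with `‖y‖ = 1`. Then `‖xₘ + xₙ‖ ≥ ‖T xₘ + T xₙ‖ → 2‖y‖ = 2` along the subsequence, so
uniform convexity makes it Cauchy; its limit is a unit vector at which `T` attains its norm,
contradicting the choice of `xₙ`.
-/

open Filter Topology

theorem UniformConvexSpace.cauchySeq_of_tendsto_norm_add {E ι : Type*}
    [SeminormedAddCommGroup E] [UniformConvexSpace E] [Nonempty ι] [SemilatticeSup ι]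
    {x : ι → E} (hx : ∀ i, ‖x i‖ = 1)
    (h : Tendsto (fun p : ι × ι => ‖x p.1 + x p.2‖) atTop (𝓝 2)) : CauchySeq x := by
  rw [Metric.cauchySeq_iff]
  intro ε hε
  obtain ⟨δ, hδ, hconv⟩ := UniformConvexSpace.uniform_convex (E := E) hε
  obtain ⟨N, hN⟩ := eventually_atTop_prod_self.1 (h.eventually (lt_mem_nhds (sub_lt_self 2 hδ)))
  refine ⟨N, fun m hm n hn => ?_⟩
  rw [dist_eq_norm]
  by_contra! hfar
  linarith [hconv (hx m) (hx n) hfar, hN m n hm hn]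

section

variable {𝕜 X Y : Type*} [RCLike 𝕜]
  [NormedAddCommGroup X] [NormedSpace 𝕜 X] [NormedAddCommGroup Y] [NormedSpace 𝕜 Y]
  {T : X →L[𝕜] Y}

theorem ContinuousLinearMap.tendsto_norm_add_of_tendsto_apply {ι : Type*} [Preorder ι]
    (hT : ‖T‖ ≤ 1) {x : ι → X} (hx : ∀ i, ‖x i‖ = 1) {y : Y} (hy₁ : ‖y‖ = 1)
    (hy : Tendsto (fun i => T (x i)) atTop (𝓝 y)) :
    Tendsto (fun p : ι × ι => ‖x p.1 + x p.2‖) atTop (𝓝 2) := by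
  have hsum : Tendsto (fun p : ι × ι => ‖T (x p.1) + T (x p.2)‖) atTop (𝓝 2) := by
    have hyy : ‖y + y‖ = 2 := by rw [← two_smul 𝕜 y, norm_smul, RCLike.norm_two, hy₁, mul_one]
    rw [← prod_atTop_atTop_eq, ← hyy]
    exact ((hy.comp tendsto_fst).add (hy.comp tendsto_snd)).norm
  refine tendsto_of_tendsto_of_tendsto_of_le_of_le hsum tendsto_const_nhds (fun p => ?_)
    (fun p => ?_)
  · rw [← map_add]
    exact T.le_of_opNorm_le hT _ |>.trans_eq (one_mul _)
  · exact (norm_add_le _ _).trans_eq (by rw [hx, hx, one_add_one_eq_two])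

theorem ContinuousLinearMap.exists_norm_attaining_mapClusterPt [ProperSpace Y] [CompleteSpace X]
    [UniformConvexSpace X] (hT : ‖T‖ ≤ 1) {x : ℕ → X} (hx : ∀ n, ‖x n‖ = 1)
    (hTx : Tendsto (fun n => ‖T (x n)‖) atTop (𝓝 1)) :
    ∃ x₁ : X, ‖x₁‖ = 1 ∧ ‖T x₁‖ = 1 ∧ MapClusterPt x₁ atTop x := by
  have hball : ∀ n, T (x n) ∈ Metric.closedBall (0 : Y) 1 := fun n => by
    simpa [hx n] using T.le_of_opNorm_le hT (x n)
  obtain ⟨y, -, φ, hφ, hy⟩ := tendsto_subseq_of_bounded Metric.isBounded_closedBall hball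
  have hy₁ : ‖y‖ = 1 := tendsto_nhds_unique hy.norm (hTx.comp hφ.tendsto_atTop)
  obtain ⟨x₁, hx₁⟩ := cauchySeq_tendsto_of_complete <|
    UniformConvexSpace.cauchySeq_of_tendsto_norm_add (fun n => hx (φ n))
      (T.tendsto_norm_add_of_tendsto_apply hT (fun n => hx (φ n)) hy₁ hy)
  have hnorm : ‖x₁‖ = 1 := tendsto_nhds_unique hx₁.norm (by simp [hx])
  have hTx₁ : T x₁ = y := tendsto_nhds_unique ((T.continuous.tendsto x₁).comp hx₁) hy
  exact ⟨x₁, hnorm, hTx₁ ▸ hy₁, hx₁.mapClusterPt.of_comp hφ.tendsto_atTop⟩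

end

theorem uniformConvex_finiteDimensional_sBPBp_general
    (𝕜 : Type*) [RCLike 𝕜]
    (X : Type*) [NormedAddCommGroup X] [NormedSpace 𝕜 X] [CompleteSpace X]
    [UniformConvexSpace X]
    (Y : Type*) [NormedAddCommGroup Y] [NormedSpace 𝕜 Y]
    [FiniteDimensional 𝕜 Y] :
    ∀ ε : ℝ, 0 < ε → ∀ T : X →L[𝕜] Y, ‖T‖ = 1 →
      ∃ η : ℝ, 0 < η ∧ ∀ x₀ : X, ‖x₀‖ = 1 → 1 - η < ‖T x₀‖ →
        ∃ x₁ : X, ‖x₁‖ = 1 ∧ ‖T x₁‖ = 1 ∧ ‖x₁ - x₀‖ < ε := by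
  intro ε hε T hT
  by_contra! hfar
  choose x hx hTx hdist using fun n : ℕ => hfar (1 / (n + 1)) Nat.one_div_pos_of_nat
  have hTle : ∀ n, ‖T (x n)‖ ≤ 1 := fun n =>
    (T.le_of_opNorm_le hT.le (x n)).trans_eq (by rw [hx n, one_mul])
  have hlim : Tendsto (fun n => ‖T (x n)‖) atTop (𝓝 1) :=
    tendsto_of_tendsto_of_tendsto_of_le_of_le
      (by simpa using
        (tendsto_const_nhds (x := (1 : ℝ))).sub tendsto_one_div_add_atTop_nhds_zero_nat)
      tendsto_const_nhds (fun n => (hTx n).le) hTle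
  have : ProperSpace Y := FiniteDimensional.proper 𝕜 Y
  obtain ⟨x₁, hx₁, hTx₁, hcluster⟩ := T.exists_norm_attaining_mapClusterPt hT.le hx hlim
  obtain ⟨n, hn⟩ := (hcluster.frequently (Metric.ball_mem_nhds x₁ hε)).exists
  exact (hdist n x₁ hx₁ hTx₁).not_gt (by rwa [dist_comm, dist_eq_norm] at hn)

/-- If `X` is a uniformly convex Banach space and `Y` is a finite-dimensional
Banach space, then the pair `(X, Y)` has the strong Bishop-Phelps-Bollobás property. -/
theorem uniformConvex_finiteDimensional_sBPBp
    (𝕜 : Type*) [RCLike 𝕜]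
    (X : Type*) [NormedAddCommGroup X] [NormedSpace 𝕜 X] [CompleteSpace X]
    [UniformConvexSpace X]
    (Y : Type*) [NormedAddCommGroup Y] [NormedSpace 𝕜 Y] [CompleteSpace Y]
    [FiniteDimensional 𝕜 Y] :
    ∀ ε : ℝ, 0 < ε → ∀ T : X →L[𝕜] Y, ‖T‖ = 1 →
      ∃ η : ℝ, 0 < η ∧ ∀ x₀ : X, ‖x₀‖ = 1 → 1 - η < ‖T x₀‖ →
        ∃ x₁ : X, ‖x₁‖ = 1 ∧ ‖T x₁‖ = 1 ∧ ‖x₁ - x₀‖ < ε :=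
  uniformConvex_finiteDimensional_sBPBp_general 𝕜 X Y
end

section
/- Let X be a Banach space over 𝕜 (𝕜 = ℝ or ℂ). If there exists a nonzero Banach space Y over 𝕜 such that the pair (X, Y) has the uniform strong Bishop-Phelps-Bollobás property, then the pair (X, 𝕜) has the uniform strong Bishop-Phelps-Bollobás property (with the same function ε ↦ η(ε)). -/
/-! For a unit vector `u ∈ Y`, the operator `x ↦ f x • u` has the same norm as the functional `f`
and `‖f x • u‖ = ‖f x‖` for every `x`, so the property of `(X, Y)` applied to it is exactly the
property of `(X, 𝕜)` for `f`. -/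

theorem ContinuousLinearMap.norm_smulRight_apply_of_norm_eq_one
    {𝕜 X Y : Type*} [NormedField 𝕜] [SeminormedAddCommGroup X] [NormedSpace 𝕜 X]
    [SeminormedAddCommGroup Y] [NormedSpace 𝕜 Y]
    (f : X →L[𝕜] 𝕜) {u : Y} (hu : ‖u‖ = 1) (x : X) :
    ‖f.smulRight u x‖ = ‖f x‖ := by
  rw [smulRight_apply, norm_smul, hu, mul_one]

theorem uniform_sBPBp_scalar_of_uniform_sBPBp_general
    (𝕜 : Type*) [RCLike 𝕜]
    (X : Type*) [NormedAddCommGroup X] [NormedSpace 𝕜 X]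
    (Y : Type*) [NormedAddCommGroup Y] [NormedSpace 𝕜 Y] [Nontrivial Y]
    (ε η : ℝ)
    (h : ∀ T : X →L[𝕜] Y, ‖T‖ = 1 → ∀ x₀ : X, ‖x₀‖ = 1 → 1 - η < ‖T x₀‖ →
      ∃ x₁ : X, ‖x₁‖ = 1 ∧ ‖T x₁‖ = 1 ∧ ‖x₁ - x₀‖ < ε) :
    ∀ f : X →L[𝕜] 𝕜, ‖f‖ = 1 → ∀ x₀ : X, ‖x₀‖ = 1 → 1 - η < ‖f x₀‖ →
      ∃ x₁ : X, ‖x₁‖ = 1 ∧ ‖f x₁‖ = 1 ∧ ‖x₁ - x₀‖ < ε := by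
  intro f hf x₀ hx₀ hfx₀
  obtain ⟨y, hy⟩ := exists_ne (0 : Y)
  have hu : ‖((‖y‖ : 𝕜)⁻¹ • y)‖ = 1 := norm_smul_inv_norm hy
  have hT := f.norm_smulRight_apply_of_norm_eq_one hu
  have hTnorm : ‖f.smulRight ((‖y‖ : 𝕜)⁻¹ • y)‖ = 1 := by
    rw [ContinuousLinearMap.norm_smulRight_apply, hf, hu, one_mul]
  obtain ⟨x₁, hx₁, hTx₁, hdist⟩ := h _ hTnorm x₀ hx₀ (by rwa [hT])
  exact ⟨x₁, hx₁, by rwa [hT] at hTx₁, hdist⟩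

/-- If for some nonzero Banach space `Y` the pair `(X, Y)` has the uniform
strong Bishop-Phelps-Bollobás property with modulus `η` (for a given `ε`), then the pair
`(X, 𝕜)` satisfies it with the very same `η`. -/
theorem uniform_sBPBp_scalar_of_uniform_sBPBp
    (𝕜 : Type*) [RCLike 𝕜]
    (X : Type*) [NormedAddCommGroup X] [NormedSpace 𝕜 X] [CompleteSpace X]
    (Y : Type*) [NormedAddCommGroup Y] [NormedSpace 𝕜 Y] [CompleteSpace Y] [Nontrivial Y]
    (ε η : ℝ) (hε : 0 < ε) (hη : 0 < η)
    (h : ∀ T : X →L[𝕜] Y, ‖T‖ = 1 → ∀ x₀ : X, ‖x₀‖ = 1 → 1 - η < ‖T x₀‖ →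
      ∃ x₁ : X, ‖x₁‖ = 1 ∧ ‖T x₁‖ = 1 ∧ ‖x₁ - x₀‖ < ε) :
    ∀ f : X →L[𝕜] 𝕜, ‖f‖ = 1 → ∀ x₀ : X, ‖x₀‖ = 1 → 1 - η < ‖f x₀‖ →
      ∃ x₁ : X, ‖x₁‖ = 1 ∧ ‖f x₁‖ = 1 ∧ ‖x₁ - x₀‖ < ε :=
  uniform_sBPBp_scalar_of_uniform_sBPBp_general 𝕜 X Y ε η h
end

section
/- Let X be a Banach space over 𝕜 (𝕜 = ℝ or ℂ). If there exists a nonzero Banach space Y over 𝕜 such that the pair (X, Y) has the uniform strong Bishop-Phelps-Bollobás property, then X is uniformly convex. -/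
/-!
Given unit vectors `x`, `z` with `‖x - z‖ ≥ ε` and `‖x + z‖ > 2 - δ`, take functionals `f`, `g`
of norm at most one norming `x + z` and `x - z`, and perturb: `F = f + t g`. Then `f ≈ 1` at both `x`
and `z`, so `F` almost attains its norm at `z`, and the strong Bishop–Phelps–Bollobás property
(applied to `F ⊗ y₀`) gives a point `p` near `z` where `F` attains its norm. Comparing
`|F p| = ‖F‖ ≥ re F x` shows `re g p ≳ re g x`, while `p ≈ z` forces
`re g p ≈ re g z ≤ re g x - ε`. Choosing `δ ≪ t ≪ ε` makes these incompatible.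
-/

open RCLike ComplexConjugate

/-- A pair of Banach spaces `(X, Y)` has the uniform strong Bishop-Phelps-Bollobás
property. -/
def UniformSBPBp (𝕜 : Type*) [RCLike 𝕜] (X Y : Type*) [NormedAddCommGroup X]
    [NormedSpace 𝕜 X] [NormedAddCommGroup Y] [NormedSpace 𝕜 Y] : Prop :=
  ∀ ε : ℝ, 0 < ε → ∃ η : ℝ, 0 < η ∧ ∀ T : X →L[𝕜] Y, ‖T‖ = 1 →
    ∀ x₀ : X, ‖x₀‖ = 1 → 1 - η < ‖T x₀‖ →
      ∃ x₁ : X, ‖x₁‖ = 1 ∧ ‖T x₁‖ = 1 ∧ ‖x₁ - x₀‖ < ε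

namespace RCLike

variable {𝕜 : Type*} [RCLike 𝕜]

theorem norm_sub_one_sq_le {c : 𝕜} (hc : ‖c‖ ≤ 1) : ‖c - 1‖ ^ 2 ≤ 2 * (1 - re c) := by
  have h : ‖c‖ ^ 2 ≤ 1 := pow_le_one₀ (norm_nonneg c) hc
  rw [norm_sq_eq_def] at h ⊢
  simp only [map_sub, one_re, one_im, sub_zero] at *
  nlinarith

theorem norm_add_ofReal_mul_le {a b : 𝕜} (ha : ‖a‖ ≤ 1) (hb : ‖b‖ ≤ 1) {t : ℝ} (ht : 0 ≤ t) :
    ‖a + t * b‖ ≤ 1 + t * (re b + ‖a - 1‖) + t ^ 2 / 2 := by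
  have hcross : re (b * conj a) ≤ re b + ‖a - 1‖ := by
    have h := re_le_norm (b * conj (a - 1))
    rw [norm_mul, norm_conj] at h
    have : re (b * conj (a - 1)) = re (b * conj a) - re b := by simp [mul_sub]
    nlinarith [norm_nonneg (a - 1)]
  have hsq : ‖a + t * b‖ ^ 2 ≤ 1 + 2 * t * (re b + ‖a - 1‖) + t ^ 2 := by
    have hexp := @norm_add_sq 𝕜 𝕜 _ _ _ a (t * b)
    rw [inner_apply, norm_mul, norm_ofReal, abs_of_nonneg ht, mul_assoc, re_ofReal_mul] at hexp
    nlinarith [pow_le_one₀ (n := 2) (norm_nonneg a) ha, pow_le_one₀ (n := 2) (norm_nonneg b) hb,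
      sq_nonneg t]
  have hb' : -1 ≤ re b := neg_le_of_abs_le ((abs_re_le_norm b).trans hb)
  refine le_of_sq_le_sq ?_ (by nlinarith [norm_nonneg (a - 1), sq_nonneg (t - 1)])
  nlinarith [sq_nonneg (t * (re b + ‖a - 1‖) + t ^ 2 / 2)]

end RCLike

section

variable {𝕜 X : Type*} [RCLike 𝕜] [NormedAddCommGroup X] [NormedSpace 𝕜 X]

theorem ContinuousLinearMap.norm_apply_le_one {f : StrongDual 𝕜 X} (hf : ‖f‖ ≤ 1) {u : X}
    (hu : ‖u‖ ≤ 1) : ‖f u‖ ≤ 1 := by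
  simpa using f.le_of_opNorm_le_of_le hf hu

theorem one_sub_lt_re_apply_of_apply_add_eq_norm {f : StrongDual 𝕜 X} (hf : ‖f‖ ≤ 1) {x z : X}
    (hx : ‖x‖ ≤ 1) (hz : ‖z‖ ≤ 1) (hfxz : f (x + z) = ‖x + z‖) {δ : ℝ}
    (hδ : 2 - δ < ‖x + z‖) : 1 - δ < re (f x) ∧ 1 - δ < re (f z) := by
  have hfx : re (f x) ≤ 1 := (re_le_norm _).trans (f.norm_apply_le_one hf hx)
  have hfz : re (f z) ≤ 1 := (re_le_norm _).trans (f.norm_apply_le_one hf hz)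
  have hsum : re (f x) + re (f z) = ‖x + z‖ := by simpa using congr_arg re hfxz
  constructor <;> linarith

theorem re_add_smul_apply_le_of_norm_apply_eq {f g : StrongDual 𝕜 X} (hf : ‖f‖ ≤ 1)
    (hg : ‖g‖ ≤ 1) {t : ℝ} (ht : 0 ≤ t) {p : X} (hp : ‖p‖ = 1)
    (hFp : ‖(f + (t : 𝕜) • g) p‖ = ‖f + (t : 𝕜) • g‖) {x : X} (hx : ‖x‖ ≤ 1) :
    re (f x) + t * re (g x) ≤ 1 + t * (re (g p) + ‖f p - 1‖) + t ^ 2 / 2 :=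
  calc re (f x) + t * re (g x) = re ((f + (t : 𝕜) • g) x) := by simp
    _ ≤ ‖(f + (t : 𝕜) • g) x‖ := re_le_norm _
    _ ≤ ‖f + (t : 𝕜) • g‖ := (f + (t : 𝕜) • g).unit_le_opNorm x hx
    _ = ‖f p + t * g p‖ := by simp [← hFp]
    _ ≤ _ := norm_add_ofReal_mul_le (f.norm_apply_le_one hf hp.le)
      (g.norm_apply_le_one hg hp.le) ht

theorem re_apply_add_norm_apply_sub_one_le {f g : StrongDual 𝕜 X} (hf : ‖f‖ ≤ 1)
    (hg : ‖g‖ ≤ 1) (p z : X) :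
    re (g p) + ‖f p - 1‖ ≤ re (g z) + ‖f z - 1‖ + 2 * ‖p - z‖ := by
  have hfpz : ‖f p - 1‖ ≤ ‖f z - 1‖ + ‖p - z‖ :=
    calc ‖f p - 1‖ = ‖(f z - 1) + f (p - z)‖ := by simp
      _ ≤ ‖f z - 1‖ + ‖f (p - z)‖ := norm_add_le _ _
      _ ≤ ‖f z - 1‖ + ‖p - z‖ := by gcongr; simpa using f.le_of_opNorm_le hf (p - z)
  have hgpz : re (g p) ≤ re (g z) + ‖p - z‖ :=
    calc re (g p) = re (g z) + re (g (p - z)) := by simp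
      _ ≤ re (g z) + ‖p - z‖ := by
        gcongr
        exact (re_le_norm _).trans (by simpa using g.le_of_opNorm_le hg (p - z))
  linarith

namespace UniformSBPBp

theorem scalar {Y : Type*} [NormedAddCommGroup Y] [NormedSpace 𝕜 Y] [Nontrivial Y]
    (h : UniformSBPBp 𝕜 X Y) : UniformSBPBp 𝕜 X 𝕜 := by
  obtain ⟨y, hy⟩ := exists_ne (0 : Y)
  set y₀ : Y := (‖y‖⁻¹ : 𝕜) • y
  have hy₀ : ‖y₀‖ = 1 := norm_smul_inv_norm hy
  have hnorm (φ : StrongDual 𝕜 X) (u : X) : ‖φ.smulRight y₀ u‖ = ‖φ u‖ := by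
    simp [norm_smul, hy₀]
  intro ε hε
  obtain ⟨η, hη, hT⟩ := h ε hε
  refine ⟨η, hη, fun φ hφ x₀ hx₀ hφx₀ => ?_⟩
  have hT1 : ‖φ.smulRight y₀‖ = 1 := by
    rw [ContinuousLinearMap.norm_smulRight_apply, hφ, hy₀, mul_one]
  simpa only [hnorm] using hT (φ.smulRight y₀) hT1 x₀ hx₀ (by rwa [hnorm])

theorem exists_norm_apply_eq_norm (h : UniformSBPBp 𝕜 X 𝕜) {ε : ℝ} (hε : 0 < ε) :
    ∃ η > 0, ∀ F : StrongDual 𝕜 X, ∀ x₀ : X, ‖x₀‖ = 1 → (1 - η) * ‖F‖ < ‖F x₀‖ →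
      ∃ x₁ : X, ‖x₁‖ = 1 ∧ ‖F x₁‖ = ‖F‖ ∧ ‖x₁ - x₀‖ < ε := by
  obtain ⟨η, hη, hφ⟩ := h ε hε
  refine ⟨η, hη, fun F x₀ hx₀ hFx₀ => ?_⟩
  have hF₀ : F ≠ 0 := by
    rintro rfl
    simp at hFx₀
  have hF : 0 < ‖F‖ := norm_pos_iff.mpr hF₀
  have hnorm (u : X) : ‖((‖F‖⁻¹ : 𝕜) • F) u‖ = ‖F u‖ / ‖F‖ := by
    simp [div_eq_inv_mul]
  obtain ⟨x₁, hx₁, hFx₁, hx₁x₀⟩ := hφ ((‖F‖⁻¹ : 𝕜) • F) (norm_smul_inv_norm hF₀) x₀ hx₀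
    (by rw [hnorm, lt_div_iff₀ hF]; linarith)
  rw [hnorm, div_eq_one_iff_eq hF.ne'] at hFx₁
  exact ⟨x₁, hx₁, hFx₁, hx₁x₀⟩

theorem uniformConvexSpace (h : UniformSBPBp 𝕜 X 𝕜) : UniformConvexSpace X := by
  refine ⟨fun ε hε => ?_⟩
  obtain ⟨η, hη, hattain⟩ := h.exists_norm_apply_eq_norm (ε := ε / 16) (by positivity)
  set t := min (η / 8) (ε / 8)
  have ht : 0 < t := by positivity
  have htη : t ≤ η / 8 := min_le_left _ _
  have htε : t ≤ ε / 8 := min_le_right _ _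
  refine ⟨t * ε / 4, by positivity, fun x hx z hz hxz => ?_⟩
  by_contra! hxz_add
  have hε2 : ε ≤ 2 := hxz.trans ((norm_sub_le x z).trans (by simp [hx, hz]; norm_num))
  obtain ⟨f, hf, hfxz⟩ := exists_dual_vector'' 𝕜 (x + z)
  obtain ⟨g, hg, hgxz⟩ := exists_dual_vector'' 𝕜 (x - z)
  obtain ⟨hfx, hfz⟩ := one_sub_lt_re_apply_of_apply_add_eq_norm hf hx.le hz.le hfxz hxz_add
  have hgx : re (g z) + ε ≤ re (g x) := by
    have : re (g x) - re (g z) = ‖x - z‖ := by simpa using congr_arg re hgxz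
    linarith
  set F := f + (t : 𝕜) • g
  have hF : ‖F‖ ≤ 1 + t := by
    have := add_le_add hf (mul_le_of_le_one_right ht.le hg)
    exact (norm_add_le _ _).trans (by simpa [norm_smul, abs_of_pos ht] using this)
  have hFz : 1 - t * ε / 4 - t ≤ ‖F z‖ := by
    have hreF : re (F z) = re (f z) + t * re (g z) := by simp [F]
    have hgz : -1 ≤ re (g z) :=
      neg_le_of_abs_le ((abs_re_le_norm _).trans (g.norm_apply_le_one hg hz.le))
    nlinarith [re_le_norm (F z)]
  have hFz_almost : (1 - η) * ‖F‖ < ‖F z‖ := by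
    have htε2 : t * ε ≤ 2 * t := by nlinarith
    nlinarith [mul_le_mul_of_nonneg_left (hFz.trans (F.unit_le_opNorm z hz.le)) hη.le,
      mul_le_mul_of_nonneg_left htε2 hη.le]
  obtain ⟨p, hp, hFp, hpz⟩ := hattain F z hz hFz_almost
  have hfz_near : ‖f z - 1‖ < ε / 4 := by
    refine lt_of_pow_lt_pow_left₀ 2 (by positivity) ?_
    nlinarith [norm_sub_one_sq_le (f.norm_apply_le_one hf hz.le)]
  have hkey := re_add_smul_apply_le_of_norm_apply_eq hf hg ht.le hp hFp hx.le
  have hmove := re_apply_add_norm_apply_sub_one_le hf hg p z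
  nlinarith [mul_le_mul_of_nonneg_left hgx ht.le, mul_le_mul_of_nonneg_left hmove ht.le,
    mul_lt_mul_of_pos_left hfz_near ht, mul_lt_mul_of_pos_left hpz ht]

end UniformSBPBp

end

theorem uniformConvex_of_uniform_sBPBp_general
    (𝕜 : Type*) [RCLike 𝕜]
    (X : Type*) [NormedAddCommGroup X] [NormedSpace 𝕜 X]
    (Y : Type*) [NormedAddCommGroup Y] [NormedSpace 𝕜 Y] [Nontrivial Y]
    (h : UniformSBPBp 𝕜 X Y) :
    UniformConvexSpace X :=
  h.scalar.uniformConvexSpace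

/-- If there exists a nonzero Banach space `Y` such that the pair `(X, Y)` has
the uniform strong Bishop-Phelps-Bollobás property, then `X` is uniformly convex. -/
theorem uniformConvex_of_uniform_sBPBp
    (𝕜 : Type*) [RCLike 𝕜]
    (X : Type*) [NormedAddCommGroup X] [NormedSpace 𝕜 X] [CompleteSpace X]
    (Y : Type*) [NormedAddCommGroup Y] [NormedSpace 𝕜 Y] [CompleteSpace Y] [Nontrivial Y]
    (h : UniformSBPBp 𝕜 X Y) :
    UniformConvexSpace X :=
  uniformConvex_of_uniform_sBPBp_general 𝕜 X Y h
end

section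
/- For 𝕜 = ℝ or ℂ, the pair (ℓ₂², ℓ_∞²) fails the uniform strong Bishop-Phelps-Bollobás property. Concretely, for every η with 0 < η < 1 there exists a bounded linear operator T : ℓ₂² → ℓ_∞² with ‖T‖ = 1 and a vector x₀ ∈ ℓ₂² with ‖x₀‖₂ = 1 and ‖T x₀‖_∞ > 1 - η, such that every z ∈ ℓ₂² with ‖z‖₂ = 1 and ‖T z‖_∞ = 1 satisfies ‖z - x₀‖₂ = √2. -/
open scoped ENNReal

/-!
For `0 < c < 1` the diagonal operator `diag(1, c) : ℓ₂² → ℓ_∞²` has norm one and almost attains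
it at `e₂`, where it takes the value `c`. But a unit vector `z` can only reach `‖T z‖_∞ = 1`
through its first coordinate, which forces `|z₁| = 1` and `z₂ = 0`; such a `z` is orthogonal
to `e₂`, hence at distance `√2` from it, however close `c` is to `1`.
-/

section Diagonal

variable {𝕜 ι : Type*} [RCLike 𝕜]

noncomputable def diagonalL2LInfty (w : ι → 𝕜) :
    PiLp 2 (fun _ : ι => 𝕜) →L[𝕜] PiLp ∞ (fun _ : ι => 𝕜) :=
  (PiLp.continuousLinearEquiv ∞ 𝕜 _).symm.toContinuousLinearMap ∘L
    ContinuousLinearMap.pi (fun i => w i • ContinuousLinearMap.proj i) ∘L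
      (PiLp.continuousLinearEquiv 2 𝕜 _).toContinuousLinearMap

@[simp]
theorem diagonalL2LInfty_apply (w : ι → 𝕜) (x : PiLp 2 (fun _ : ι => 𝕜)) (i : ι) :
    diagonalL2LInfty w x i = w i * x i :=
  rfl

variable [Fintype ι]

theorem norm_diagonalL2LInfty_apply (w : ι → 𝕜) (x : PiLp 2 (fun _ : ι => 𝕜)) :
    ‖diagonalL2LInfty w x‖ = ⨆ i, ‖w i‖ * ‖x i‖ := by
  simp [PiLp.norm_eq_ciSup]

variable {w : ι → 𝕜}

theorem norm_diagonalL2LInfty_apply_le (hw : ∀ i, ‖w i‖ ≤ 1) (x : PiLp 2 (fun _ : ι => 𝕜)) :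
    ‖diagonalL2LInfty w x‖ ≤ ‖x‖ := by
  cases isEmpty_or_nonempty ι
  · simp [Subsingleton.elim (diagonalL2LInfty w x) 0]
  rw [norm_diagonalL2LInfty_apply]
  exact ciSup_le fun i =>
    (mul_le_of_le_one_left (norm_nonneg _) (hw i)).trans (PiLp.norm_apply_le x i)

theorem norm_diagonalL2LInfty [DecidableEq ι] (hw : ∀ i, ‖w i‖ ≤ 1) {i : ι} (hi : ‖w i‖ = 1) :
    ‖diagonalL2LInfty w‖ = 1 := by
  refine le_antisymm ((diagonalL2LInfty w).opNorm_le_bound zero_le_one fun x => by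
    simpa using norm_diagonalL2LInfty_apply_le hw x) ?_
  calc 1 = ‖diagonalL2LInfty w (PiLp.single 2 i 1) i‖ := by simp [hi]
    _ ≤ ‖diagonalL2LInfty w (PiLp.single 2 i 1)‖ := PiLp.norm_apply_le _ i
    _ ≤ ‖diagonalL2LInfty w‖ := by
      simpa using (diagonalL2LInfty w).le_opNorm (PiLp.single 2 i 1)

theorem exists_norm_eq_one_of_norm_diagonalL2LInfty_apply_eq_one (hw : ∀ i, ‖w i‖ ≤ 1)
    {x : PiLp 2 (fun _ : ι => 𝕜)} (hx : ‖x‖ ≤ 1) (h : ‖diagonalL2LInfty w x‖ = 1) :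
    ∃ i, ‖w i‖ = 1 ∧ ‖x i‖ = 1 := by
  cases isEmpty_or_nonempty ι
  · simp [Subsingleton.elim (diagonalL2LInfty w x) 0] at h
  obtain ⟨i, hi⟩ := exists_eq_ciSup_of_finite (f := fun i => ‖w i‖ * ‖x i‖)
  rw [← norm_diagonalL2LInfty_apply, h] at hi
  have hxi : ‖x i‖ ≤ 1 := (PiLp.norm_apply_le x i).trans hx
  refine ⟨i, ?_, ?_⟩ <;> nlinarith [hw i, norm_nonneg (w i), norm_nonneg (x i)]

end Diagonal

section Euclidean

variable {𝕜 ι : Type*} [RCLike 𝕜] [Fintype ι]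

theorem PiLp.apply_eq_zero_of_norm_apply_eq_norm {x : PiLp 2 (fun _ : ι => 𝕜)} {i j : ι}
    (h : ‖x i‖ = ‖x‖) (hji : j ≠ i) : x j = 0 := by
  classical
  have hsum := PiLp.norm_sq_eq_of_L2 _ x
  rw [← Finset.add_sum_erase _ _ (Finset.mem_univ i), h, left_eq_add,
    Finset.sum_eq_zero_iff_of_nonneg fun _ _ => by positivity] at hsum
  simpa using hsum j (by simp [hji])

theorem PiLp.norm_sub_single_eq_sqrt_two [DecidableEq ι] {x : PiLp 2 (fun _ : ι => 𝕜)} {j : ι}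
    (hx : ‖x‖ = 1) (hj : x j = 0) : ‖x - PiLp.single 2 j 1‖ = √2 := by
  have : ‖x - PiLp.single 2 j 1‖ ^ 2 = 2 := by
    rw [@norm_sub_sq 𝕜, hx, EuclideanSpace.inner_single_right]
    norm_num [hj]
  rw [← this, Real.sqrt_sq (norm_nonneg _)]

end Euclidean

/-- The pair `(ℓ₂², ℓ_∞²)` fails the uniform strong Bishop-Phelps-Bollobás
property: for every `0 < η < 1` there are a norm-one operator `T : ℓ₂² → ℓ_∞²` and a unit
vector `x₀` with `‖T x₀‖ > 1 - η` such that every unit vector `z` at which `T` attains its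
norm satisfies `‖z - x₀‖ = √2`. -/
theorem l2_linf_fails_uniform_sBPBp
    (𝕜 : Type*) [RCLike 𝕜] :
    ∀ η : ℝ, 0 < η → η < 1 →
      ∃ (T : PiLp 2 (fun _ : Fin 2 => 𝕜) →L[𝕜] PiLp ∞ (fun _ : Fin 2 => 𝕜))
        (x₀ : PiLp 2 (fun _ : Fin 2 => 𝕜)),
        ‖T‖ = 1 ∧ ‖x₀‖ = 1 ∧ 1 - η < ‖T x₀‖ ∧
          ∀ z : PiLp 2 (fun _ : Fin 2 => 𝕜), ‖z‖ = 1 → ‖T z‖ = 1 →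
            ‖z - x₀‖ = Real.sqrt 2 := by
  intro η hη hη1
  set c : ℝ := 1 - η / 2 with hc_def
  have hc_lt : c < 1 := by linarith
  have hc : ‖(c : 𝕜)‖ = c := by rw [RCLike.norm_ofReal, abs_of_pos (by linarith)]
  set w : Fin 2 → 𝕜 := ![1, (c : 𝕜)]
  have hw : ∀ i, ‖w i‖ ≤ 1 := by
    intro i
    fin_cases i <;> simp [w, hc, hc_lt.le]
  refine ⟨diagonalL2LInfty w, PiLp.single 2 1 1, norm_diagonalL2LInfty hw (i := 0) (by simp [w]),
    by simp, ?_, fun z hz hTz => ?_⟩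
  · calc 1 - η < c := by linarith
      _ = ‖diagonalL2LInfty w (PiLp.single 2 1 1) 1‖ := by simp [w, hc]
      _ ≤ _ := PiLp.norm_apply_le _ 1
  · obtain ⟨i, hwi, hzi⟩ :=
      exists_norm_eq_one_of_norm_diagonalL2LInfty_apply_eq_one hw hz.le hTz
    obtain rfl : i = 0 := by
      fin_cases i
      · rfl
      · simp [w, hc, hc_lt.ne] at hwi
    exact PiLp.norm_sub_single_eq_sqrt_two hz
      (PiLp.apply_eq_zero_of_norm_apply_eq_norm (hzi.trans hz.symm) (by decide))
end

section
/- For 𝕜 = ℝ or ℂ, the pair (ℓ₂², ℓ₂²) fails the uniform strong Bishop-Phelps-Bollobás property. Concretely, for every η with 0 < η < 1 there exists a bounded linear operator T : ℓ₂² → ℓ₂² with ‖T‖ = 1 and a vector x₀ ∈ ℓ₂² with ‖x₀‖₂ = 1 and ‖T x₀‖₂ > 1 - η, such that every z ∈ ℓ₂² with ‖z‖₂ = 1 and ‖T z‖₂ = 1 satisfies ‖z - x₀‖₂ = √2. -/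
/-!
Take `T = diag(1, c)` with `1 - η < c < 1` and `x₀ = e₁`. Then `‖T‖ = 1` and `‖T x₀‖ = c`, but
`‖T z‖² = |z₀|² + c²|z₁|²` equals `‖z‖²` only when `z₁ = 0`, so every unit vector at which `T`
attains its norm is orthogonal to `x₀` and therefore at distance `√2` from it.
-/

open Matrix WithLp
open scoped Matrix.Norms.L2Operator

namespace Matrix

variable {𝕜 ι : Type*} [RCLike 𝕜] [Fintype ι] [DecidableEq ι]

lemma norm_sq_toEuclideanCLM_diagonal_apply (v : ι → 𝕜) (x : EuclideanSpace 𝕜 ι) :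
    ‖toEuclideanCLM (𝕜 := 𝕜) (diagonal v) x‖ ^ 2 = ∑ i, ‖v i‖ ^ 2 * ‖x i‖ ^ 2 := by
  simp [EuclideanSpace.norm_sq_eq, mulVec_diagonal, norm_mul, mul_pow]

lemma toEuclideanCLM_diagonal_single (v : ι → 𝕜) (i : ι) (a : 𝕜) :
    toEuclideanCLM (𝕜 := 𝕜) (diagonal v) (EuclideanSpace.single i a) =
      EuclideanSpace.single i (v i * a) := by
  ext j
  by_cases h : j = i <;> simp [h, mulVec_diagonal]

lemma apply_eq_zero_of_norm_toEuclideanCLM_diagonal_apply_eq {v : ι → 𝕜} (hv : ‖v‖ ≤ 1)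
    {x : EuclideanSpace 𝕜 ι} (hx : ‖toEuclideanCLM (𝕜 := 𝕜) (diagonal v) x‖ = ‖x‖) {i : ι}
    (hi : ‖v i‖ < 1) : x i = 0 := by
  have hdefect : ∑ j, (1 - ‖v j‖ ^ 2) * ‖x j‖ ^ 2 = 0 := by
    simp only [sub_mul, one_mul, Finset.sum_sub_distrib, ← EuclideanSpace.norm_sq_eq,
      ← norm_sq_toEuclideanCLM_diagonal_apply, hx, sub_self]
  have hnonneg : ∀ j ∈ Finset.univ, 0 ≤ (1 - ‖v j‖ ^ 2) * ‖x j‖ ^ 2 := fun j _ ↦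
    mul_nonneg (by nlinarith [norm_nonneg (v j), norm_le_pi_norm v j]) (sq_nonneg _)
  have hi' := (Finset.sum_eq_zero_iff_of_nonneg hnonneg).mp hdefect i (Finset.mem_univ i)
  have hpos : 0 < 1 - ‖v i‖ ^ 2 := by nlinarith [norm_nonneg (v i)]
  simpa [hpos.ne'] using hi'

end Matrix

namespace EuclideanSpace

variable {𝕜 ι : Type*} [RCLike 𝕜] [Fintype ι] [DecidableEq ι]

lemma norm_sub_single_sq_of_apply_eq_zero {x : EuclideanSpace 𝕜 ι} {i : ι} (hx : x i = 0)
    (a : 𝕜) : ‖x - single i a‖ ^ 2 = ‖x‖ ^ 2 + ‖a‖ ^ 2 := by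
  rw [@norm_sub_sq 𝕜, inner_single_right]
  simp [hx]

end EuclideanSpace

/-- The pair `(ℓ₂², ℓ₂²)` fails the uniform strong Bishop-Phelps-Bollobás
property: for every `0 < η < 1` there are a norm-one operator `T : ℓ₂² → ℓ₂²` and a unit
vector `x₀` with `‖T x₀‖ > 1 - η` such that every unit vector `z` at which `T` attains its
norm satisfies `‖z - x₀‖ = √2`. -/
theorem l2_l2_fails_uniform_sBPBp
    (𝕜 : Type*) [RCLike 𝕜] :
    ∀ η : ℝ, 0 < η → η < 1 →
      ∃ (T : PiLp 2 (fun _ : Fin 2 => 𝕜) →L[𝕜] PiLp 2 (fun _ : Fin 2 => 𝕜))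
        (x₀ : PiLp 2 (fun _ : Fin 2 => 𝕜)),
        ‖T‖ = 1 ∧ ‖x₀‖ = 1 ∧ 1 - η < ‖T x₀‖ ∧
          ∀ z : PiLp 2 (fun _ : Fin 2 => 𝕜), ‖z‖ = 1 → ‖T z‖ = 1 →
            ‖z - x₀‖ = Real.sqrt 2 := by
  intro η hη hη1
  set c : ℝ := 1 - η / 2 with hc
  have hc0 : 0 < c := by linarith
  have hc1 : c < 1 := by linarith
  have hnorm_c : ‖(c : 𝕜)‖ = c := by rw [RCLike.norm_ofReal, abs_of_pos hc0]
  set v : Fin 2 → 𝕜 := ![1, (c : 𝕜)]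
  have hv : ‖v‖ = 1 := by
    refine le_antisymm ((pi_norm_le_iff_of_nonneg zero_le_one).mpr ?_) ?_
    · simp [v, Fin.forall_fin_two, hnorm_c, hc1.le]
    · simpa [v] using norm_le_pi_norm v 0
  refine ⟨toEuclideanCLM (𝕜 := 𝕜) (n := Fin 2) (diagonal v), EuclideanSpace.single 1 1,
    ?_, by simp, ?_, fun z hz hTz ↦ ?_⟩
  · rw [l2_opNorm_toEuclideanCLM, l2_opNorm_diagonal, hv]
  · simpa [toEuclideanCLM_diagonal_single, v, hnorm_c] using (by linarith : 1 - η < c)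
  · have hz₁ : z 1 = 0 :=
      apply_eq_zero_of_norm_toEuclideanCLM_diagonal_apply_eq hv.le (hTz.trans hz.symm)
        (by simp [v, hnorm_c, hc1])
    rw [← sq_eq_sq₀ (norm_nonneg _) (Real.sqrt_nonneg 2),
      EuclideanSpace.norm_sub_single_sq_of_apply_eq_zero hz₁, hz]
    norm_num
end

section
/- Let 𝕜 = ℝ or ℂ, let 1 < p ≤ q < ∞, and let β ∈ (0, 1). Then there exists a bounded linear operator T_β : ℓ_p² → ℓ_q² with ‖T_β‖ = 1 such that (i) ‖T_β e₁‖_q = β, where e₁ = (1, 0), and (ii) every z ∈ ℓ_p² with ‖z‖_p = 1 and ‖T_β z‖_q = 1 satisfies ‖z - e₁‖_p = 2^(1/p). -/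
/-!
Take `T_β = diag(β, 1)`. It shrinks every coordinate, so `‖T_β z‖_q ≤ ‖z‖_q ≤ ‖z‖_p`
(`ℓ_p`-norms decrease in `p`), and `T_β e₂ = e₂`; hence `‖T_β‖ = 1`. If `‖z‖_p = 1` and the first
coordinate of `z` is nonzero, it is shrunk strictly, so `‖T_β z‖_q < ‖z‖_q ≤ 1`. A norming vector
is therefore `z = (0, z₂)` with `|z₂| = 1`, and `‖z - e₁‖_p = (1 + 1)^(1/p)`.
-/

open scoped ENNReal
open WithLp (toLp ofLp)

namespace PiLp

variable {ι : Type*} [Fintype ι] {β : ι → Type*} [∀ i, SeminormedAddCommGroup (β i)]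

theorem norm_rpow_eq_sum {p : ℝ≥0∞} (hp : 0 < p.toReal) (f : PiLp p β) :
    ‖f‖ ^ p.toReal = ∑ i, ‖f i‖ ^ p.toReal := by
  rw [norm_eq_sum hp, ← Real.rpow_mul (by positivity), one_div_mul_cancel hp.ne', Real.rpow_one]

theorem norm_le_norm_of_forall_norm_apply_le {p : ℝ≥0∞} [Fact (1 ≤ p)] {x y : PiLp p β}
    (h : ∀ i, ‖x i‖ ≤ ‖y i‖) : ‖x‖ ≤ ‖y‖ := by
  rcases eq_or_ne p ∞ with rfl | hp
  · rw [norm_eq_ciSup, norm_eq_ciSup]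
    exact ciSup_mono (Set.finite_range _).bddAbove h
  · have hp₀ := p.toReal_pos_iff_ne_top.mpr hp
    rw [← Real.rpow_le_rpow_iff (norm_nonneg x) (norm_nonneg y) hp₀, norm_rpow_eq_sum hp₀,
      norm_rpow_eq_sum hp₀]
    gcongr with i
    exact h i

theorem norm_lt_norm_of_forall_norm_apply_le {p : ℝ≥0∞} [Fact (1 ≤ p)] (hp : p ≠ ∞)
    {x y : PiLp p β} (h : ∀ i, ‖x i‖ ≤ ‖y i‖) {j : ι} (hj : ‖x j‖ < ‖y j‖) : ‖x‖ < ‖y‖ := by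
  have hp₀ := p.toReal_pos_iff_ne_top.mpr hp
  rw [← Real.rpow_lt_rpow_iff (norm_nonneg x) (norm_nonneg y) hp₀, norm_rpow_eq_sum hp₀,
    norm_rpow_eq_sum hp₀]
  refine Finset.sum_lt_sum (fun i _ => ?_) ⟨j, Finset.mem_univ j, ?_⟩
  · exact Real.rpow_le_rpow (norm_nonneg _) (h i) hp₀.le
  · exact Real.rpow_lt_rpow (norm_nonneg _) hj hp₀

theorem norm_toLp_le_of_le {p q : ℝ≥0∞} [Fact (1 ≤ p)] [Fact (1 ≤ q)] (hpq : p ≤ q)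
    (x : ∀ i, β i) : ‖toLp q x‖ ≤ ‖toLp p x‖ := by
  rcases eq_or_ne q ∞ with rfl | hq
  · rw [norm_eq_ciSup]
    exact Real.iSup_le (fun i => norm_apply_le (toLp p x) i) (norm_nonneg _)
  have hp₀ := p.toReal_pos_iff_ne_top.mpr (ne_top_of_le_ne_top hq hpq)
  have hq₀ := q.toReal_pos_iff_ne_top.mpr hq
  have hpq' : 0 ≤ q.toReal - p.toReal := sub_nonneg.2 (ENNReal.toReal_mono hq hpq)
  set s := ‖toLp p x‖
  -- `‖x i‖ ≤ s` gives `‖x i‖ ^ q ≤ ‖x i‖ ^ p * s ^ (q - p)`; summing yields `s ^ p * s ^ (q - p)`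
  rw [← Real.rpow_le_rpow_iff (norm_nonneg _) (norm_nonneg _) hq₀, norm_rpow_eq_sum hq₀]
  calc ∑ i, ‖x i‖ ^ q.toReal = ∑ i, ‖x i‖ ^ p.toReal * ‖x i‖ ^ (q.toReal - p.toReal) := by
        refine Finset.sum_congr rfl fun i _ => ?_
        rw [← Real.rpow_add' (norm_nonneg _) (by simpa using hq₀.ne'), add_sub_cancel]
    _ ≤ ∑ i, ‖x i‖ ^ p.toReal * s ^ (q.toReal - p.toReal) := by
        gcongr with i
        exact norm_apply_le (toLp p x) i
    _ = s ^ q.toReal := by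
        rw [← Finset.sum_mul, ← norm_rpow_eq_sum hp₀ (toLp p x),
          ← Real.rpow_add' (norm_nonneg _) (by simpa using hq₀.ne'), add_sub_cancel]

theorem norm_fin_two {E : Type*} [SeminormedAddCommGroup E] {p : ℝ≥0∞} (hp : 0 < p.toReal)
    (x : PiLp p (fun _ : Fin 2 => E)) :
    ‖x‖ = (‖x 0‖ ^ p.toReal + ‖x 1‖ ^ p.toReal) ^ (1 / p.toReal) := by
  rw [norm_eq_sum hp, Fin.sum_univ_two]

end PiLp

namespace Matrix

variable {ι 𝕜 : Type*} [Fintype ι] [DecidableEq ι] [NormedField 𝕜] {p q : ℝ≥0∞} {c : ι → 𝕜}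

theorem toLpLin_diagonal_apply (c : ι → 𝕜) (z : WithLp p (ι → 𝕜)) (i : ι) :
    toLpLin p q (diagonal c) z i = c i * z i :=
  mulVec_diagonal c (ofLp z) i

theorem toLpLin_diagonal_single (c : ι → 𝕜) (i : ι) (a : 𝕜) :
    toLpLin p q (diagonal c) (PiLp.single p i a) = PiLp.single q i (c i * a) :=
  congrArg (toLp q) (diagonal_mulVec_single c i a)

theorem norm_toLpLin_diagonal_apply_le_norm_apply (hc : ∀ i, ‖c i‖ ≤ 1)
    (z : WithLp p (ι → 𝕜)) (i : ι) : ‖toLpLin p q (diagonal c) z i‖ ≤ ‖z i‖ := by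
  rw [toLpLin_diagonal_apply, norm_mul]
  exact mul_le_of_le_one_left (norm_nonneg _) (hc i)

variable [Fact (1 ≤ p)] [Fact (1 ≤ q)]

theorem norm_toLpLin_diagonal_apply_le (hpq : p ≤ q) (hc : ∀ i, ‖c i‖ ≤ 1)
    (z : WithLp p (ι → 𝕜)) : ‖toLpLin p q (diagonal c) z‖ ≤ ‖z‖ :=
  (PiLp.norm_le_norm_of_forall_norm_apply_le
    (norm_toLpLin_diagonal_apply_le_norm_apply (q := q) hc z)).trans
    (PiLp.norm_toLp_le_of_le hpq (ofLp z))

theorem norm_toLpLin_diagonal_apply_lt (hpq : p ≤ q) (hq : q ≠ ∞) (hc : ∀ i, ‖c i‖ ≤ 1)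
    {z : WithLp p (ι → 𝕜)} {j : ι} (hcj : ‖c j‖ < 1) (hzj : z j ≠ 0) :
    ‖toLpLin p q (diagonal c) z‖ < ‖z‖ := by
  have hj : ‖toLpLin p q (diagonal c) z j‖ < ‖z j‖ := by
    rw [toLpLin_diagonal_apply, norm_mul]
    exact mul_lt_of_lt_one_left (norm_pos_iff.2 hzj) hcj
  exact (PiLp.norm_lt_norm_of_forall_norm_apply_le (y := toLp q (ofLp z)) hq
    (norm_toLpLin_diagonal_apply_le_norm_apply hc z) hj).trans_le
    (PiLp.norm_toLp_le_of_le hpq (ofLp z))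

end Matrix

theorem lp_lq_two_dim_operator_general
    (𝕜 : Type*) [RCLike 𝕜] (p q : ℝ≥0∞) [Fact (1 ≤ p)] [Fact (1 ≤ q)]
    (hpq : p ≤ q) (hq : q < ∞) (β : ℝ) (hβ0 : 0 < β) (hβ1 : β < 1) :
    ∃ T : PiLp p (fun _ : Fin 2 => 𝕜) →L[𝕜] PiLp q (fun _ : Fin 2 => 𝕜),
      ‖T‖ = 1 ∧
      ‖T ((WithLp.equiv p (Fin 2 → 𝕜)).symm ![1, 0])‖ = β ∧
      ∀ z : PiLp p (fun _ : Fin 2 => 𝕜), ‖z‖ = 1 → ‖T z‖ = 1 →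
        ‖z - (WithLp.equiv p (Fin 2 → 𝕜)).symm ![1, 0]‖ = (2 : ℝ) ^ (1 / p.toReal) := by
  let c : Fin 2 → 𝕜 := ![(β : 𝕜), 1]
  have hc₀ : ‖c 0‖ < 1 := by simpa [c, abs_of_pos hβ0] using hβ1
  have hc : ∀ i, ‖c i‖ ≤ 1 := by
    intro i; fin_cases i
    exacts [hc₀.le, by simp [c]]
  let T := LinearMap.toContinuousLinearMap (Matrix.toLpLin p q (Matrix.diagonal c))
  have he₁ : (WithLp.equiv p (Fin 2 → 𝕜)).symm ![1, 0] = PiLp.single p 0 1 := by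
    ext i; fin_cases i <;> simp
  refine ⟨T, le_antisymm ?_ ?_, ?_, ?_⟩
  · exact T.opNorm_le_bound zero_le_one fun z =>
      (Matrix.norm_toLpLin_diagonal_apply_le hpq hc z).trans_eq (one_mul _).symm
  · simpa [T, Matrix.toLpLin_diagonal_single, c] using
      T.unit_le_opNorm (x := PiLp.single p 1 1) (by simp)
  · simp [T, he₁, Matrix.toLpLin_diagonal_single, c, abs_of_pos hβ0]
  · intro z hz hTz
    have hz₀ : z 0 = 0 := by
      by_contra hz₀
      exact (Matrix.norm_toLpLin_diagonal_apply_lt hpq hq.ne hc hc₀ hz₀).ne (hTz.trans hz.symm)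
    have hz₁ : ‖z 1‖ = 1 := by
      have hz_single : z = PiLp.single p 1 (z 1) := by
        ext i; fin_cases i <;> simp [hz₀]
      rwa [hz_single, PiLp.norm_single] at hz
    have hp₀ : 0 < p.toReal := p.toReal_pos_iff_ne_top.mpr (ne_top_of_le_ne_top hq.ne hpq)
    rw [he₁, PiLp.norm_fin_two hp₀]
    norm_num [hz₀, hz₁]

/-- For `1 < p ≤ q < ∞` and `β ∈ (0, 1)` there is a norm-one operator
`T_β : ℓ_p² → ℓ_q²` with `‖T_β e₁‖ = β` such that every unit vector `z` at which `T_β`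
attains its norm satisfies `‖z - e₁‖ = 2^(1/p)`. -/
theorem lp_lq_two_dim_operator
    (𝕜 : Type*) [RCLike 𝕜] (p q : ℝ≥0∞) [Fact (1 ≤ p)] [Fact (1 ≤ q)]
    (hp : 1 < p) (hpq : p ≤ q) (hq : q < ∞) (β : ℝ) (hβ0 : 0 < β) (hβ1 : β < 1) :
    ∃ T : PiLp p (fun _ : Fin 2 => 𝕜) →L[𝕜] PiLp q (fun _ : Fin 2 => 𝕜),
      ‖T‖ = 1 ∧
      ‖T ((WithLp.equiv p (Fin 2 → 𝕜)).symm ![1, 0])‖ = β ∧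
      ∀ z : PiLp p (fun _ : Fin 2 => 𝕜), ‖z‖ = 1 → ‖T z‖ = 1 →
        ‖z - (WithLp.equiv p (Fin 2 → 𝕜)).symm ![1, 0]‖ = (2 : ℝ) ^ (1 / p.toReal) :=
  lp_lq_two_dim_operator_general 𝕜 p q hpq hq β hβ0 hβ1
end

section
/- Let 𝕜 = ℝ or ℂ and let 1 < p ≤ q < ∞. Then the pair (ℓ_p, ℓ_q) of sequence spaces fails the uniform strong Bishop-Phelps-Bollobás property. -/
/-!
Already for a single `ε`, the uniform strong Bishop-Phelps-Bollobás property forces every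
norm-one operator to attain its norm: choose `x₀` with `‖T x₀‖ > 1 - η`. The diagonal operator
`x ↦ (n / (n + 1) * xₙ)ₙ` from `ℓ^p` to `ℓ^q` has norm one, since its multipliers tend to `1`,
but does not attain it: for `p ≤ q < ∞` and `x ≠ 0`, `‖T x‖_q ≤ ‖T x‖_p < ‖x‖_p` because every
multiplier is `< 1`.
-/

open scoped ENNReal

theorem UniformSBPBp.exists_norm_eq_one_norm_apply_eq_one {𝕜 : Type*} [RCLike 𝕜] {X Y : Type*}
    [NormedAddCommGroup X] [NormedSpace 𝕜 X] [NormedAddCommGroup Y] [NormedSpace 𝕜 Y]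
    (h : UniformSBPBp 𝕜 X Y) (T : X →L[𝕜] Y) (hT : ‖T‖ = 1) :
    ∃ x : X, ‖x‖ = 1 ∧ ‖T x‖ = 1 := by
  obtain ⟨η, hη, hT'⟩ := h 1 one_pos
  have hlt : (1 - η).toNNReal < ‖T‖₊ := by
    rw [← NNReal.coe_lt_coe, coe_nnnorm, hT, Real.coe_toNNReal']
    exact max_lt (by linarith) one_pos
  obtain ⟨x₀, hx₀, hTx₀⟩ := T.exists_nnnorm_eq_one_lt_apply_of_lt_opNNNorm hlt
  obtain ⟨x, hx, hTx, -⟩ := hT' T hT x₀ (congrArg NNReal.toReal hx₀)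
    ((Real.le_coe_toNNReal _).trans_lt hTx₀)
  exact ⟨x, hx, hTx⟩

namespace lp

variable {ι : Type*}

theorem norm_le_norm_of_exponent_le {E F : ι → Type*} [∀ i, NormedAddCommGroup (E i)]
    [∀ i, NormedAddCommGroup (F i)] {p q : ℝ≥0∞} (hp : p ≠ 0) (hpq : p ≤ q) {f : lp E p}
    {g : lp F q} (h : ∀ i, ‖g i‖ ≤ ‖f i‖) : ‖g‖ ≤ ‖f‖ := by
  rcases eq_or_ne q ∞ with rfl | hq
  · exact norm_le_of_forall_le (norm_nonneg' f) fun i ↦ (h i).trans (norm_apply_le_norm hp f i)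
  have hp₀ : 0 < p.toReal := ENNReal.toReal_pos hp (ne_top_of_le_ne_top hq hpq)
  have hpq' : p.toReal ≤ q.toReal := ENNReal.toReal_mono hq hpq
  have hsplit (t : ℝ) (ht : 0 ≤ t) : t ^ q.toReal = t ^ (q.toReal - p.toReal) * t ^ p.toReal := by
    rw [← Real.rpow_add_of_nonneg ht (by linarith) hp₀.le, sub_add_cancel]
  -- `‖f i‖ ≤ ‖f‖` absorbs the excess exponent `q - p`
  refine norm_le_of_forall_sum_le (hp₀.trans_le hpq') (norm_nonneg' f) fun s ↦ ?_
  calc ∑ i ∈ s, ‖g i‖ ^ q.toReal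
      ≤ ∑ i ∈ s, ‖f‖ ^ (q.toReal - p.toReal) * ‖f i‖ ^ p.toReal := by
        gcongr with i
        calc ‖g i‖ ^ q.toReal ≤ ‖f i‖ ^ q.toReal := by gcongr; exact h i
          _ = ‖f i‖ ^ (q.toReal - p.toReal) * ‖f i‖ ^ p.toReal := hsplit _ (norm_nonneg _)
          _ ≤ ‖f‖ ^ (q.toReal - p.toReal) * ‖f i‖ ^ p.toReal := by
            gcongr
            exact norm_apply_le_norm hp f i
    _ = ‖f‖ ^ (q.toReal - p.toReal) * ∑ i ∈ s, ‖f i‖ ^ p.toReal := (Finset.mul_sum ..).symm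
    _ ≤ ‖f‖ ^ (q.toReal - p.toReal) * ‖f‖ ^ p.toReal :=
        mul_le_mul_of_nonneg_left (sum_rpow_le_norm_rpow hp₀ f s)
          (Real.rpow_nonneg (norm_nonneg' f) _)
    _ = ‖f‖ ^ q.toReal := (hsplit _ (norm_nonneg' f)).symm

theorem norm_lt_norm_of_forall_le_of_lt {E F : ι → Type*} [∀ i, NormedAddCommGroup (E i)]
    [∀ i, NormedAddCommGroup (F i)] {p : ℝ≥0∞} (hp : 0 < p.toReal) {f : lp E p} {g : lp F p}
    (h : ∀ i, ‖g i‖ ≤ ‖f i‖) {i : ι} (hi : ‖g i‖ < ‖f i‖) : ‖g‖ < ‖f‖ := by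
  rw [← Real.rpow_lt_rpow_iff (norm_nonneg' g) (norm_nonneg' f) hp, norm_rpow_eq_tsum hp,
    norm_rpow_eq_tsum hp]
  exact Summable.tsum_lt_tsum (fun j ↦ by gcongr; exact h j) (by gcongr)
    ((lp.memℓp g).summable hp) ((lp.memℓp f).summable hp)

section Diagonal

variable {𝕜 : Type*} [NontriviallyNormedField 𝕜] {p q : ℝ≥0∞} [Fact (1 ≤ p)] [Fact (1 ≤ q)]

theorem norm_mul_apply_le {c : ι → 𝕜} (hc : ∀ i, ‖c i‖ ≤ 1) (x : ι → 𝕜) (i : ι) :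
    ‖c i * x i‖ ≤ ‖x i‖ := by
  rw [norm_mul]
  exact mul_le_of_le_one_left (norm_nonneg _) (hc i)

noncomputable def diagonal (c : ι → 𝕜) (hc : ∀ i, ‖c i‖ ≤ 1) (hpq : p ≤ q) :
    lp (fun _ : ι ↦ 𝕜) p →L[𝕜] lp (fun _ : ι ↦ 𝕜) q :=
  LinearMap.mkContinuous
    { toFun x := ⟨fun i ↦ c i * x i,
        ((lp.memℓp x).of_exponent_ge hpq).mono' (norm_mul_apply_le hc x)⟩
      map_add' x y := by ext i; exact mul_add _ _ _
      map_smul' a x := by ext i; exact mul_left_comm _ _ _ } 1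
    fun x ↦ (one_mul ‖x‖).symm ▸
      norm_le_norm_of_exponent_le (zero_lt_one.trans_le Fact.out).ne' hpq
        (norm_mul_apply_le hc x)

@[simp]
theorem diagonal_apply {c : ι → 𝕜} (hc : ∀ i, ‖c i‖ ≤ 1) (hpq : p ≤ q)
    (x : lp (fun _ : ι ↦ 𝕜) p) (i : ι) : diagonal c hc hpq x i = c i * x i :=
  rfl

theorem norm_diagonal_le {c : ι → 𝕜} (hc : ∀ i, ‖c i‖ ≤ 1) (hpq : p ≤ q) :
    ‖diagonal c hc hpq‖ ≤ 1 :=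
  LinearMap.mkContinuous_norm_le _ zero_le_one _

theorem diagonal_single [DecidableEq ι] {c : ι → 𝕜} (hc : ∀ i, ‖c i‖ ≤ 1) (hpq : p ≤ q)
    (i : ι) (a : 𝕜) : diagonal c hc hpq (lp.single p i a) = lp.single q i (c i * a) := by
  ext j
  rcases eq_or_ne j i with rfl | hji
  · simp
  · simp [Pi.single_eq_of_ne hji]

theorem norm_diagonal {c : ι → 𝕜} (hc : ∀ i, ‖c i‖ ≤ 1) (hpq : p ≤ q)
    (hc₁ : IsLUB (Set.range fun i ↦ ‖c i‖) 1) : ‖diagonal c hc hpq‖ = 1 := by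
  classical
  refine (norm_diagonal_le hc hpq).antisymm (hc₁.2 ?_)
  rintro _ ⟨i, rfl⟩
  have hp : 0 < p := zero_lt_one.trans_le Fact.out
  have hq : 0 < q := zero_lt_one.trans_le Fact.out
  simpa [diagonal_single, lp.norm_single hp, lp.norm_single hq] using
    (diagonal c hc hpq).le_opNorm (lp.single p i 1)

theorem norm_diagonal_apply_lt {c : ι → 𝕜} (hc : ∀ i, ‖c i‖ ≤ 1) (hpq : p ≤ q) (hp : p ≠ ∞)
    (hc₁ : ∀ i, ‖c i‖ < 1) {x : lp (fun _ : ι ↦ 𝕜) p} (hx : x ≠ 0) :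
    ‖diagonal c hc hpq x‖ < ‖x‖ := by
  have hp₀ : p ≠ 0 := (zero_lt_one.trans_le Fact.out).ne'
  obtain ⟨i, hi⟩ : ∃ i, x i ≠ 0 := by
    by_contra! h
    exact hx (lp.ext (funext h))
  calc ‖diagonal c hc hpq x‖ ≤ ‖diagonal c hc le_rfl x‖ :=
        norm_le_norm_of_exponent_le hp₀ hpq fun _ ↦ le_rfl
    _ < ‖x‖ := by
        refine norm_lt_norm_of_forall_le_of_lt (ENNReal.toReal_pos hp₀ hp)
          (norm_mul_apply_le hc x) (i := i) ?_
        rw [diagonal_apply, norm_mul]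
        exact mul_lt_of_lt_one_left (norm_pos_iff.2 hi) (hc₁ i)

end Diagonal

end lp

theorem isLUB_range_natCast_div_add_one :
    IsLUB (Set.range fun n : ℕ ↦ (n : ℝ) / (n + 1)) 1 := by
  refine isLUB_of_tendsto_atTop (fun m n hmn ↦ ?_) (tendsto_natCast_div_add_atTop 1)
  rw [div_le_div_iff₀ (by positivity) (by positivity)]
  have : (m : ℝ) ≤ n := by exact_mod_cast hmn
  linarith

theorem lp_lq_fails_uniform_sBPBp_general
    (𝕜 : Type*) [RCLike 𝕜] (p q : ℝ≥0∞) [Fact (1 ≤ p)] [Fact (1 ≤ q)]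
    (hpq : p ≤ q) (hq : q < ∞) :
    ¬ UniformSBPBp 𝕜 (lp (fun _ : ℕ => 𝕜) p) (lp (fun _ : ℕ => 𝕜) q) := by
  intro h
  set c : ℕ → 𝕜 := fun n ↦ (((n : ℝ) / (n + 1) : ℝ) : 𝕜)
  have hc_norm (n : ℕ) : ‖c n‖ = n / (n + 1) := RCLike.norm_of_nonneg (by positivity)
  have hc_lt (n : ℕ) : ‖c n‖ < 1 := by
    rw [hc_norm, div_lt_one (by positivity)]
    exact lt_add_one _
  have hc_le (n : ℕ) : ‖c n‖ ≤ 1 := (hc_lt n).le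
  obtain ⟨x, hx, hTx⟩ := h.exists_norm_eq_one_norm_apply_eq_one (lp.diagonal c hc_le hpq)
    (lp.norm_diagonal hc_le hpq (by simpa only [hc_norm] using isLUB_range_natCast_div_add_one))
  have hx₀ : x ≠ 0 := by rintro rfl; simp at hx
  exact (lp.norm_diagonal_apply_lt hc_le hpq (hpq.trans_lt hq).ne hc_lt hx₀).ne (hTx.trans hx.symm)

/-- For `1 < p ≤ q < ∞` the pair `(ℓ_p, ℓ_q)` of scalar sequence spaces fails
the uniform strong Bishop-Phelps-Bollobás property. -/
theorem lp_lq_fails_uniform_sBPBp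
    (𝕜 : Type*) [RCLike 𝕜] (p q : ℝ≥0∞) [Fact (1 ≤ p)] [Fact (1 ≤ q)]
    (hp : 1 < p) (hpq : p ≤ q) (hq : q < ∞) :
    ¬ UniformSBPBp 𝕜 (lp (fun _ : ℕ => 𝕜) p) (lp (fun _ : ℕ => 𝕜) q) :=
  lp_lq_fails_uniform_sBPBp_general 𝕜 p q hpq hq
end

section
/- Let ℓ₂² and ℓ₁² denote ℝ² with the euclidean norm and the sum norm, respectively, and let β ∈ (0, 1). Then there exists a bounded linear operator T_β : ℓ₂² → ℓ₁² with ‖T_β‖ = 1 such that (i) ‖T_β e₁‖₁ = β, where e₁ = (1, 0), and (ii) every z ∈ ℓ₂² with ‖z‖₂ = 1 and ‖T_β z‖₁ = 1 satisfies ‖z - e₁‖₂ = √2. -/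
/-!
Take `T z = ((z₁ + β z₀) / 2, (z₁ - β z₀) / 2)` (coordinates indexed from 0): the map
`z ↦ (z₁, β z₀)` followed by the isometry `(a, b) ↦ ((a + b) / 2, (a - b) / 2)` of `ℓ_∞²` onto
`ℓ₁²`, so `‖T z‖₁ = max |z₁| (β |z₀|)`. Since `β < 1`, on the Euclidean unit circle this maximum
is `≤ 1`, with equality only at `z = (0, ±1)`, which is orthogonal to `e₁` and hence at distance
`√2` from it; and `‖T e₁‖₁ = β`.
-/

local notation "ℓ²₂" => PiLp 2 (fun _ : Fin 2 => ℝ)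
local notation "ℓ²₁" => PiLp 1 (fun _ : Fin 2 => ℝ)

theorem abs_add_add_abs_sub_eq_two_mul_max {α : Type*} [CommRing α] [LinearOrder α]
    [IsStrictOrderedRing α] (a b : α) : |a + b| + |a - b| = 2 * max |a| |b| := by
  grind [abs_cases]

theorem norm_toLp_one_half_add_half_sub (a b : ℝ) :
    ‖WithLp.toLp 1 ![(a + b) / 2, (a - b) / 2]‖ = max |a| |b| := by
  rw [PiLp.norm_eq_of_L1]
  simp only [Fin.sum_univ_two, Matrix.cons_val_zero, Matrix.cons_val_one,
    Real.norm_eq_abs, abs_div, abs_two]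
  linarith [abs_add_add_abs_sub_eq_two_mul_max a b]

theorem norm_sq_eq_fin_two (z : ℓ²₂) : ‖z‖ ^ 2 = z 0 ^ 2 + z 1 ^ 2 := by
  simp [PiLp.norm_sq_eq_of_L2, Fin.sum_univ_two]

theorem norm_sub_toLp_one_zero_sq (z : ℓ²₂) :
    ‖z - WithLp.toLp 2 ![1, 0]‖ ^ 2 = ‖z‖ ^ 2 - 2 * z 0 + 1 := by
  rw [norm_sq_eq_fin_two, norm_sq_eq_fin_two]
  simp only [PiLp.sub_apply, Matrix.cons_val_zero, Matrix.cons_val_one]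
  ring

noncomputable def rotatedDiagonal (β : ℝ) : ℓ²₂ →L[ℝ] ℓ²₁ :=
  LinearMap.toContinuousLinearMap
    { toFun z := WithLp.toLp 1 ![(z 1 + β * z 0) / 2, (z 1 - β * z 0) / 2]
      map_add' x y := by ext i; fin_cases i <;> simp <;> ring
      map_smul' c x := by ext i; fin_cases i <;> simp <;> ring }

namespace rotatedDiagonal

variable {β : ℝ}

theorem apply (z : ℓ²₂) :
    rotatedDiagonal β z = WithLp.toLp 1 ![(z 1 + β * z 0) / 2, (z 1 - β * z 0) / 2] :=
  rfl

theorem norm_apply (hβ : 0 ≤ β) (z : ℓ²₂) : ‖rotatedDiagonal β z‖ = max |z 1| (β * |z 0|) := by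
  rw [apply]
  simpa only [abs_mul, abs_of_nonneg hβ] using norm_toLp_one_half_add_half_sub (z 1) (β * z 0)

theorem norm_apply_le (hβ0 : 0 ≤ β) (hβ1 : β ≤ 1) (z : ℓ²₂) : ‖rotatedDiagonal β z‖ ≤ ‖z‖ := by
  have h0 : |z 0| ≤ ‖z‖ := PiLp.norm_apply_le z 0
  have h1 : |z 1| ≤ ‖z‖ := PiLp.norm_apply_le z 1
  rw [norm_apply hβ0, max_le_iff]
  exact ⟨h1, by nlinarith [abs_nonneg (z 0)]⟩

theorem opNorm_eq_one (hβ0 : 0 ≤ β) (hβ1 : β ≤ 1) : ‖rotatedDiagonal β‖ = 1 := by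
  set e₂ : ℓ²₂ := WithLp.toLp 2 ![0, 1]
  have he₂ : ‖e₂‖ = 1 := by simp [e₂, EuclideanSpace.norm_eq, Fin.sum_univ_two]
  have hTe₂ : ‖rotatedDiagonal β e₂‖ = 1 := by simp [e₂, norm_apply hβ0]
  refine le_antisymm ?_ ?_
  · exact ContinuousLinearMap.opNorm_le_bound _ zero_le_one fun z ↦ by
      rw [one_mul]; exact norm_apply_le hβ0 hβ1 z
  · simpa [hTe₂] using (rotatedDiagonal β).unit_le_opNorm e₂ he₂.le

theorem apply_zero_eq_zero_of_norm_apply_eq_one (hβ0 : 0 ≤ β) (hβ1 : β < 1) {z : ℓ²₂}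
    (hz : ‖z‖ = 1) (hTz : ‖rotatedDiagonal β z‖ = 1) : z 0 = 0 := by
  have hsq : z 0 ^ 2 + z 1 ^ 2 = 1 := by rw [← norm_sq_eq_fin_two, hz, one_pow]
  have hz0 : |z 0| ≤ 1 := hz ▸ PiLp.norm_apply_le z 0
  have hβz0 : β * |z 0| < 1 := by nlinarith [abs_nonneg (z 0)]
  have hz1 : |z 1| = 1 := by
    rw [norm_apply hβ0] at hTz
    rcases max_choice |z 1| (β * |z 0|) with h | h <;> rw [h] at hTz
    · exact hTz
    · exact absurd hTz hβz0.ne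
  have : z 1 ^ 2 = 1 := by rw [← sq_abs, hz1, one_pow]
  nlinarith

end rotatedDiagonal

/-- For `β ∈ (0, 1)` there is a norm-one operator `T_β : ℓ₂²(ℝ) → ℓ₁²(ℝ)`
with `‖T_β e₁‖ = β` such that every unit vector `z` at which `T_β` attains its norm
satisfies `‖z - e₁‖ = √2`. -/
theorem l2_l1_two_dim_operator
    (β : ℝ) (hβ0 : 0 < β) (hβ1 : β < 1) :
    ∃ T : PiLp 2 (fun _ : Fin 2 => ℝ) →L[ℝ] PiLp 1 (fun _ : Fin 2 => ℝ),
      ‖T‖ = 1 ∧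
      ‖T ((WithLp.equiv 2 (Fin 2 → ℝ)).symm ![1, 0])‖ = β ∧
      ∀ z : PiLp 2 (fun _ : Fin 2 => ℝ), ‖z‖ = 1 → ‖T z‖ = 1 →
        ‖z - (WithLp.equiv 2 (Fin 2 → ℝ)).symm ![1, 0]‖ = Real.sqrt 2 := by
  refine ⟨rotatedDiagonal β, rotatedDiagonal.opNorm_eq_one hβ0.le hβ1.le, ?_, ?_⟩
  · simp [rotatedDiagonal.norm_apply hβ0.le, hβ0.le]
  · intro z hz hTz
    have hz0 := rotatedDiagonal.apply_zero_eq_zero_of_norm_apply_eq_one hβ0.le hβ1 hz hTz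
    rw [WithLp.equiv_symm_apply, ← Real.sqrt_sq (norm_nonneg _), norm_sub_toLp_one_zero_sq, hz,
      hz0]
    norm_num
end

section
/- Let ℓ₂² and ℓ_q² denote ℝ² with the euclidean norm and the q-norm, respectively, where 1 ≤ q < 2, and let β ∈ (0, 1). Then there exists a bounded linear operator T_β : ℓ₂² → ℓ_q² with ‖T_β‖ = 1 such that (i) ‖T_β e₁‖_q = β, where e₁ = (1, 0), and (ii) every z ∈ ℓ₂² with ‖z‖₂ = 1 and ‖T_β z‖_q = 1 satisfies ‖z - e₁‖₂ = √2. -/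
/-!
Take `T = H ∘ D` with `D (z₀, z₁) = (β z₀, z₁)` on `ℓ₂²` and `H w = 2^{-1/q} (w₀ + w₁, w₀ - w₁)`.
Comparing norms on `ℝ²` gives `‖w‖_q ≤ 2^{1/q - 1/2} ‖w‖₂` for `q ≤ 2`, and
`‖(w₀ + w₁, w₀ - w₁)‖₂ = √2 ‖w‖₂`, so `H : ℓ₂² → ℓ_q²` is a contraction; it is isometric on the
coordinate axes. `D` is a contraction, strict off the axis `z₀ = 0` because `|β| < 1`. Hence
`‖T‖ = 1 = ‖T e₂‖` and `‖T e₁‖ = β`, while a unit vector with `‖T z‖ = 1` must have `z₀ = 0`,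
i.e. `z = ±e₂`, at distance `√2` from `e₁`.
-/

open scoped ENNReal NNReal

theorem PiLp.norm_toLp_le_card_rpow_mul_norm_toLp {ι : Type*} [Fintype ι] {β : ι → Type*}
    [∀ i, SeminormedAddCommGroup (β i)] {p q : ℝ≥0∞} [Fact (1 ≤ p)] [Fact (1 ≤ q)]
    (hpq : p ≤ q) (hq : q ≠ ⊤) (x : ∀ i, β i) :
    ‖WithLp.toLp p x‖
      ≤ (Fintype.card ι : ℝ) ^ (1 / p.toReal - 1 / q.toReal) * ‖WithLp.toLp q x‖ := by
  have hp : p ≠ ⊤ := ne_top_of_le_ne_top hq hpq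
  have hr : 0 < p.toReal := ENNReal.toReal_pos (zero_lt_one.trans_le Fact.out).ne' hp
  have hrs : p.toReal ≤ q.toReal := ENNReal.toReal_mono hq hpq
  have hs : 0 < q.toReal := hr.trans_le hrs
  suffices ‖WithLp.toLp p x‖₊
      ≤ (Fintype.card ι : ℝ≥0) ^ (1 / p.toReal - 1 / q.toReal) * ‖WithLp.toLp q x‖₊ by
    exact_mod_cast this
  rw [PiLp.nnnorm_eq_sum hp, PiLp.nnnorm_eq_sum hq]
  have key := NNReal.rpow_sum_le_const_mul_sum_rpow Finset.univ (fun i => ‖x i‖₊ ^ p.toReal)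
    ((one_le_div₀ hr).2 hrs)
  simp only [← NNReal.rpow_mul, mul_div_cancel₀ _ hr.ne', Finset.card_univ] at key
  have := NNReal.rpow_le_rpow key (one_div_nonneg.2 hs.le)
  rw [NNReal.mul_rpow, ← NNReal.rpow_mul, ← NNReal.rpow_mul] at this
  convert this using 3 <;> field_simp

theorem PiLp.norm_toLp_fin_two_of_abs_eq {p : ℝ≥0∞} [Fact (1 ≤ p)] (hp : p ≠ ⊤) {a b : ℝ}
    (hab : |b| = |a|) : ‖WithLp.toLp p ![a, b]‖ = 2 ^ (1 / p.toReal) * |a| := by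
  have hr : 0 < p.toReal := ENNReal.toReal_pos (zero_lt_one.trans_le Fact.out).ne' hp
  rw [PiLp.norm_eq_sum hr]
  simp only [Real.norm_eq_abs, Fin.sum_univ_two, Matrix.cons_val_zero, Matrix.cons_val_one, hab]
  rw [← two_mul, Real.mul_rpow zero_le_two (by positivity), one_div,
    Real.rpow_rpow_inv (abs_nonneg a) hr.ne']

theorem PiLp.norm_sq_fin_two (z : PiLp 2 (fun _ : Fin 2 => ℝ)) : ‖z‖ ^ 2 = z 0 ^ 2 + z 1 ^ 2 := by
  simp [EuclideanSpace.real_norm_sq_eq, Fin.sum_univ_two]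

noncomputable def scaledHadamard (p : ℝ≥0∞) [Fact (1 ≤ p)] :
    PiLp 2 (fun _ : Fin 2 => ℝ) →L[ℝ] PiLp p (fun _ : Fin 2 => ℝ) :=
  LinearMap.toContinuousLinearMap
  { toFun := fun w => (2 : ℝ) ^ (-(1 / p.toReal)) • WithLp.toLp p ![w 0 + w 1, w 0 - w 1]
    map_add' := by
      intro x y; ext i
      fin_cases i <;> simp <;> ring
    map_smul' := by
      intro c x; ext i
      fin_cases i <;> simp <;> ring }

section
variable {p : ℝ≥0∞} [Fact (1 ≤ p)]

theorem scaledHadamard_apply (w : PiLp 2 (fun _ : Fin 2 => ℝ)) :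
    scaledHadamard p w = (2 : ℝ) ^ (-(1 / p.toReal)) • WithLp.toLp p ![w 0 + w 1, w 0 - w 1] :=
  rfl

theorem norm_scaledHadamard (w : PiLp 2 (fun _ : Fin 2 => ℝ)) :
    ‖scaledHadamard p w‖ = 2 ^ (-(1 / p.toReal)) * ‖WithLp.toLp p ![w 0 + w 1, w 0 - w 1]‖ := by
  rw [scaledHadamard_apply, norm_smul, Real.norm_of_nonneg (by positivity)]

theorem norm_scaledHadamard_le (hp : p ≤ 2) (w : PiLp 2 (fun _ : Fin 2 => ℝ)) :
    ‖scaledHadamard p w‖ ≤ ‖w‖ := by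
  have hcomp := PiLp.norm_toLp_le_card_rpow_mul_norm_toLp hp ENNReal.ofNat_ne_top
    ![w 0 + w 1, w 0 - w 1]
  have hL2 : ‖WithLp.toLp 2 ![w 0 + w 1, w 0 - w 1]‖ = √2 * ‖w‖ := by
    rw [← sq_eq_sq₀ (norm_nonneg _) (by positivity), mul_pow, PiLp.norm_sq_fin_two,
      PiLp.norm_sq_fin_two]
    simp only [Matrix.cons_val_zero, Matrix.cons_val_one, Real.sq_sqrt zero_le_two]
    ring
  calc ‖scaledHadamard p w‖ = 2 ^ (-(1 / p.toReal)) * ‖WithLp.toLp p ![w 0 + w 1, w 0 - w 1]‖ :=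
        norm_scaledHadamard w
    _ ≤ 2 ^ (-(1 / p.toReal)) * (2 ^ (1 / p.toReal - 1 / 2) * (√2 * ‖w‖)) := by
        gcongr
        simpa [hL2] using hcomp
    _ = ‖w‖ := by
        rw [Real.sqrt_eq_rpow, ← mul_assoc, ← mul_assoc, ← Real.rpow_add two_pos,
          ← Real.rpow_add two_pos]
        ring_nf
        simp

theorem norm_scaledHadamard_toLp_of_mul_eq_zero (hp : p ≠ ⊤) {a b : ℝ} (hab : a * b = 0) :
    ‖scaledHadamard p (WithLp.toLp 2 ![a, b])‖ = |a + b| := by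
  have habs : |a - b| = |a + b| := by
    rcases mul_eq_zero.1 hab with rfl | rfl <;> simp
  rw [norm_scaledHadamard]
  simp only [Matrix.cons_val_zero, Matrix.cons_val_one]
  rw [PiLp.norm_toLp_fin_two_of_abs_eq hp habs, ← mul_assoc, ← Real.rpow_add two_pos]
  simp

end

noncomputable def scaleFirstCoord (β : ℝ) :
    PiLp 2 (fun _ : Fin 2 => ℝ) →L[ℝ] PiLp 2 (fun _ : Fin 2 => ℝ) :=
  LinearMap.toContinuousLinearMap
  { toFun := fun z => WithLp.toLp 2 ![β * z 0, z 1]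
    map_add' := by
      intro x y; ext i
      fin_cases i <;> simp [mul_add]
    map_smul' := by
      intro c x; ext i
      fin_cases i <;> simp [mul_left_comm] }

theorem scaleFirstCoord_apply (β : ℝ) (z : PiLp 2 (fun _ : Fin 2 => ℝ)) :
    scaleFirstCoord β z = WithLp.toLp 2 ![β * z 0, z 1] :=
  rfl

theorem norm_sq_scaleFirstCoord (β : ℝ) (z : PiLp 2 (fun _ : Fin 2 => ℝ)) :
    ‖scaleFirstCoord β z‖ ^ 2 = β ^ 2 * z 0 ^ 2 + z 1 ^ 2 := by
  rw [PiLp.norm_sq_fin_two, scaleFirstCoord_apply]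
  simp only [Matrix.cons_val_zero, Matrix.cons_val_one]
  ring

theorem norm_scaleFirstCoord_le {β : ℝ} (hβ : |β| ≤ 1) (z : PiLp 2 (fun _ : Fin 2 => ℝ)) :
    ‖scaleFirstCoord β z‖ ≤ ‖z‖ := by
  rw [← sq_le_sq₀ (norm_nonneg _) (norm_nonneg _), norm_sq_scaleFirstCoord, PiLp.norm_sq_fin_two]
  have : β ^ 2 ≤ 1 := by nlinarith [sq_abs β, abs_nonneg β]
  nlinarith [sq_nonneg (z 0)]

theorem eq_zero_of_norm_le_norm_scaleFirstCoord {β : ℝ} (hβ : |β| < 1)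
    {z : PiLp 2 (fun _ : Fin 2 => ℝ)} (h : ‖z‖ ≤ ‖scaleFirstCoord β z‖) : z 0 = 0 := by
  rw [← sq_le_sq₀ (norm_nonneg _) (norm_nonneg _), norm_sq_scaleFirstCoord,
    PiLp.norm_sq_fin_two] at h
  have : β ^ 2 < 1 := by nlinarith [sq_abs β, abs_nonneg β]
  exact pow_eq_zero_iff two_ne_zero |>.1 (by nlinarith [sq_nonneg (z 0)])

theorem l2_lq_two_dim_operator_general
    (q : ℝ≥0∞) [Fact (1 ≤ q)] (hq2 : q < 2)
    (β : ℝ) (hβ0 : 0 < β) (hβ1 : β < 1) :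
    ∃ T : PiLp 2 (fun _ : Fin 2 => ℝ) →L[ℝ] PiLp q (fun _ : Fin 2 => ℝ),
      ‖T‖ = 1 ∧
      ‖T ((WithLp.equiv 2 (Fin 2 → ℝ)).symm ![1, 0])‖ = β ∧
      ∀ z : PiLp 2 (fun _ : Fin 2 => ℝ), ‖z‖ = 1 → ‖T z‖ = 1 →
        ‖z - (WithLp.equiv 2 (Fin 2 → ℝ)).symm ![1, 0]‖ = Real.sqrt 2 := by
  have hβ : |β| < 1 := abs_lt.2 ⟨by linarith, hβ1⟩
  have hT_le (z) : ‖scaledHadamard q (scaleFirstCoord β z)‖ ≤ ‖scaleFirstCoord β z‖ :=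
    norm_scaledHadamard_le hq2.le _
  have hTe₂ : ‖scaledHadamard q (scaleFirstCoord β (WithLp.toLp 2 ![0, 1]))‖ = 1 := by
    simpa [scaleFirstCoord_apply] using
      norm_scaledHadamard_toLp_of_mul_eq_zero (a := 0) (b := 1) hq2.ne_top (zero_mul 1)
  refine ⟨(scaledHadamard q).comp (scaleFirstCoord β), le_antisymm ?_ ?_, ?_, fun z hz hTz => ?_⟩
  · exact ContinuousLinearMap.opNorm_le_bound _ zero_le_one fun z => by
      simpa using (hT_le z).trans (norm_scaleFirstCoord_le hβ.le z)
  · simpa [hTe₂, EuclideanSpace.norm_eq] using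
      ((scaledHadamard q).comp (scaleFirstCoord β)).le_opNorm (WithLp.toLp 2 ![0, 1])
  · simpa [scaleFirstCoord_apply, abs_of_pos hβ0] using
      norm_scaledHadamard_toLp_of_mul_eq_zero (a := β) (b := 0) hq2.ne_top (mul_zero β)
  · have hz0 := eq_zero_of_norm_le_norm_scaleFirstCoord hβ (hz.trans_le (hTz ▸ hT_le z))
    have hz_sq := PiLp.norm_sq_fin_two z
    rw [← sq_eq_sq₀ (norm_nonneg _) (Real.sqrt_nonneg 2), Real.sq_sqrt zero_le_two,
      PiLp.norm_sq_fin_two]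
    simp only [hz, hz0] at hz_sq
    simp only [WithLp.equiv_symm_apply, PiLp.sub_apply, hz0, Matrix.cons_val_zero,
      Matrix.cons_val_one]
    linarith

/-- For `1 ≤ q < 2` and `β ∈ (0, 1)` there is a norm-one operator
`T_β : ℓ₂²(ℝ) → ℓ_q²(ℝ)` with `‖T_β e₁‖ = β` such that every unit vector `z` at which
`T_β` attains its norm satisfies `‖z - e₁‖ = √2`. -/
theorem l2_lq_two_dim_operator
    (q : ℝ≥0∞) [Fact (1 ≤ q)] (hq1 : 1 ≤ q) (hq2 : q < 2)
    (β : ℝ) (hβ0 : 0 < β) (hβ1 : β < 1) :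
    ∃ T : PiLp 2 (fun _ : Fin 2 => ℝ) →L[ℝ] PiLp q (fun _ : Fin 2 => ℝ),
      ‖T‖ = 1 ∧
      ‖T ((WithLp.equiv 2 (Fin 2 → ℝ)).symm ![1, 0])‖ = β ∧
      ∀ z : PiLp 2 (fun _ : Fin 2 => ℝ), ‖z‖ = 1 → ‖T z‖ = 1 →
        ‖z - (WithLp.equiv 2 (Fin 2 → ℝ)).symm ![1, 0]‖ = Real.sqrt 2 :=
  l2_lq_two_dim_operator_general q hq2 β hβ0 hβ1
end

section
/- For every q with 1 ≤ q ≤ ∞, the pair (ℓ₂²(ℝ), ℓ_q²(ℝ)) fails the uniform strong Bishop-Phelps-Bollobás property. -/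
open scoped ENNReal

/-!
Let `A : E → F` be a contraction from a real inner product space with `‖A u‖ = ‖A v‖ = 1` for
orthonormal `u, v`. Squeezing the direction `v` by the factor `1 - δ`, i.e. composing with
`S_δ x = x - δ ⟪v, x⟫ v`, gives `T = A ∘ S_δ` with `‖T‖ = ‖T u‖ = 1` and `‖T v‖ = 1 - δ`; but
`‖S_δ x‖ < 1` for every unit `x` not orthogonal to `v`, so `T` attains its norm only on `v⊥`, at
distance `√2` from `v`. Letting `δ → 0` contradicts the uniform property. For `ℓ₂² → ℓ_q²` such
an `A` is the formal identity when `q ≥ 2` (norming the unit vectors) and `2 ^ (1/2 - 1/q)` times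
it when `q ≤ 2` (norming the two diagonals).
-/

open scoped InnerProductSpace
open WithLp Finset

section Squeeze

variable {E F : Type*} [NormedAddCommGroup E] [InnerProductSpace ℝ E]
  [NormedAddCommGroup F] [NormedSpace ℝ F]

noncomputable def squeezeAlong (v : E) (δ : ℝ) : E →L[ℝ] E :=
  ContinuousLinearMap.id ℝ E - δ • (innerSL ℝ v).smulRight v

theorem squeezeAlong_apply (v : E) (δ : ℝ) (z : E) :
    squeezeAlong v δ z = z - (δ * ⟪v, z⟫_ℝ) • v := by
  simp [squeezeAlong, mul_smul]

variable {v : E}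

theorem squeezeAlong_apply_of_inner_eq_zero (δ : ℝ) {z : E} (hz : ⟪v, z⟫_ℝ = 0) :
    squeezeAlong v δ z = z := by
  simp [squeezeAlong_apply, hz]

theorem squeezeAlong_apply_self (hv : ‖v‖ = 1) (δ : ℝ) :
    squeezeAlong v δ v = (1 - δ) • v := by
  rw [squeezeAlong_apply, real_inner_self_eq_norm_sq, hv]
  module

theorem norm_squeezeAlong_apply_sq (hv : ‖v‖ = 1) (δ : ℝ) (z : E) :
    ‖squeezeAlong v δ z‖ ^ 2 = ‖z‖ ^ 2 - δ * (2 - δ) * ⟪v, z⟫_ℝ ^ 2 := by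
  rw [squeezeAlong_apply, norm_sub_sq_real, inner_smul_right, norm_smul, real_inner_comm, hv,
    Real.norm_eq_abs, mul_one, sq_abs]
  ring

theorem norm_squeezeAlong_apply_le (hv : ‖v‖ = 1) {δ : ℝ} (hδ₀ : 0 ≤ δ) (hδ₂ : δ ≤ 2) (z : E) :
    ‖squeezeAlong v δ z‖ ≤ ‖z‖ := by
  refine (pow_le_pow_iff_left₀ (norm_nonneg _) (norm_nonneg z) two_ne_zero).mp ?_
  rw [norm_squeezeAlong_apply_sq hv]
  have : 0 ≤ δ * (2 - δ) := mul_nonneg hδ₀ (by linarith)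
  nlinarith [sq_nonneg ⟪v, z⟫_ℝ]

theorem inner_eq_zero_of_norm_le_norm_squeezeAlong_apply (hv : ‖v‖ = 1) {δ : ℝ} (hδ₀ : 0 < δ)
    (hδ₂ : δ < 2) {z : E} (hz : ‖z‖ ≤ ‖squeezeAlong v δ z‖) : ⟪v, z⟫_ℝ = 0 := by
  have h := pow_le_pow_left₀ (norm_nonneg _) hz 2
  rw [norm_squeezeAlong_apply_sq hv] at h
  have hδ : 0 < δ * (2 - δ) := mul_pos hδ₀ (by linarith)
  have h2 : ⟪v, z⟫_ℝ ^ 2 ≤ 0 := by nlinarith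
  exact pow_eq_zero_iff two_ne_zero |>.mp (le_antisymm h2 (sq_nonneg _))

theorem not_uniformSBPBp_of_norm_attained_on_orthonormal (A : E →L[ℝ] F)
    (hA : ∀ z, ‖A z‖ ≤ ‖z‖) {u : E} (hu : ‖u‖ = 1) (hv : ‖v‖ = 1) (huv : ⟪v, u⟫_ℝ = 0)
    (hAu : ‖A u‖ = 1) (hAv : ‖A v‖ = 1) : ¬ UniformSBPBp ℝ E F := by
  intro h
  obtain ⟨η, hη, hsBPB⟩ := h 1 one_pos
  set δ := min (η / 2) 1
  have hδ₀ : 0 < δ := by positivity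
  have hδ₁ : δ ≤ 1 := min_le_right _ _
  have hδη : δ < η := (min_le_left _ _).trans_lt (half_lt_self hη)
  set T := A ∘L squeezeAlong v δ
  have hT : ∀ z, ‖T z‖ ≤ ‖squeezeAlong v δ z‖ := fun z => hA _
  have hTu : ‖T u‖ = 1 := by
    simp [T, squeezeAlong_apply_of_inner_eq_zero δ huv, hAu]
  have hTnorm : ‖T‖ = 1 := by
    refine le_antisymm (T.opNorm_le_bound zero_le_one fun z => ?_) ?_
    · simpa using (hT z).trans (norm_squeezeAlong_apply_le hv hδ₀.le (by linarith) z)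
    · simpa [hTu, hu] using T.le_opNorm u
  have hTv : ‖T v‖ = 1 - δ := by
    simp [T, squeezeAlong_apply_self hv, norm_smul, hAv, abs_of_nonneg (sub_nonneg.2 hδ₁)]
  obtain ⟨x, hx, hTx, hxv⟩ := hsBPB T hTnorm v hv (by linarith)
  have hvx : ⟪v, x⟫_ℝ = 0 := inner_eq_zero_of_norm_le_norm_squeezeAlong_apply hv hδ₀
    (by linarith) (by simpa [hx, hTx] using hT x)
  have hdist : ‖x - v‖ ^ 2 = 2 := by
    rw [norm_sub_sq_real, hx, hv, real_inner_comm, hvx]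
    norm_num
  nlinarith [norm_nonneg (x - v)]

end Squeeze

namespace PiLp

def congrExponent (𝕜 : Type*) [Semiring 𝕜] {ι : Type*} (β : ι → Type*)
    [∀ i, AddCommGroup (β i)] [∀ i, Module 𝕜 (β i)] [∀ i, TopologicalSpace (β i)]
    (p q : ℝ≥0∞) : PiLp p β ≃L[𝕜] PiLp q β :=
  (continuousLinearEquiv p 𝕜 β).trans (continuousLinearEquiv q 𝕜 β).symm

@[simp]
theorem congrExponent_apply (𝕜 : Type*) [Semiring 𝕜] {ι : Type*} (β : ι → Type*)
    [∀ i, AddCommGroup (β i)] [∀ i, Module 𝕜 (β i)] [∀ i, TopologicalSpace (β i)]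
    (p q : ℝ≥0∞) (x : PiLp p β) : congrExponent 𝕜 β p q x = toLp q (ofLp x) :=
  rfl

theorem norm_eq_of_forall_norm_eq {ι : Type*} [Fintype ι] {p : ℝ≥0∞} {β γ : ι → Type*}
    [∀ i, SeminormedAddCommGroup (β i)] [∀ i, SeminormedAddCommGroup (γ i)]
    {x : PiLp p β} {y : PiLp p γ} (h : ∀ i, ‖x i‖ = ‖y i‖) : ‖x‖ = ‖y‖ := by
  rcases p.trichotomy with rfl | rfl | hp
  · simp [norm_eq_card, h]
  · simp [norm_eq_ciSup, h]
  · simp [norm_eq_sum hp, h]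

variable {ι : Type*} [Fintype ι] {β : ι → Type*} [∀ i, SeminormedAddCommGroup (β i)]
  {q : ℝ≥0∞} [Fact (1 ≤ q)]

theorem norm_toLp_le_norm_toLp_two (hq : 2 ≤ q) (x : ∀ i, β i) :
    ‖toLp q x‖ ≤ ‖toLp 2 x‖ := by
  rcases eq_or_ne q ∞ with rfl | hq_top
  · exact Real.iSup_le (fun i => norm_apply_le (toLp 2 x) i) (norm_nonneg _)
  set p := q.toReal
  have hp : 2 ≤ p := by simpa using ENNReal.toReal_mono hq_top hq
  set N := ‖toLp 2 x‖
  have hsum : ∑ i, ‖x i‖ ^ p ≤ N ^ p := calc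
    ∑ i, ‖x i‖ ^ p = ∑ i, ‖x i‖ ^ 2 * ‖x i‖ ^ (p - 2) := by
      refine sum_congr rfl fun i _ => ?_
      rw [← Real.rpow_two, ← Real.rpow_add' (norm_nonneg _) (by linarith), add_sub_cancel]
    _ ≤ ∑ i, ‖x i‖ ^ 2 * N ^ (p - 2) := by
      gcongr with i
      exact norm_apply_le (toLp 2 x) i
    _ = N ^ p := by
      rw [← sum_mul, ← norm_sq_eq_of_L2 β (toLp 2 x), ← Real.rpow_two,
        ← Real.rpow_add' (norm_nonneg _) (by linarith), add_sub_cancel]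
  rw [norm_eq_sum (by positivity)]
  calc (∑ i, ‖x i‖ ^ p) ^ (1 / p) ≤ (N ^ p) ^ (1 / p) := by gcongr
    _ = N := by
      rw [← Real.rpow_mul (norm_nonneg _), mul_one_div_cancel (by positivity), Real.rpow_one]

theorem norm_toLp_le_card_rpow_mul_norm_toLp_two (hq : q ≤ 2) (x : ∀ i, β i) :
    ‖toLp q x‖ ≤ (Fintype.card ι : ℝ) ^ (1 / q.toReal - 1 / 2) * ‖toLp 2 x‖ := by
  have hq_top : q ≠ ∞ := (hq.trans_lt ENNReal.ofNat_lt_top).ne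
  set p := q.toReal
  have hp₁ : 1 ≤ p := by simpa using ENNReal.toReal_mono hq_top (Fact.out : 1 ≤ q)
  have hp₂ : p ≤ 2 := by simpa using ENNReal.toReal_mono (by norm_num) hq
  set S := ∑ i, ‖x i‖ ^ p
  have hS : 0 ≤ S := by positivity
  have hpower : S ^ (2 / p) ≤ (Fintype.card ι : ℝ) ^ (2 / p - 1) * ‖toLp 2 x‖ ^ 2 := by
    have := Real.rpow_sum_le_const_mul_sum_rpow_of_nonneg (s := univ) (f := fun i => ‖x i‖ ^ p)
      ((one_le_div (by positivity)).2 hp₂) (fun i _ => by positivity)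
    have hsq : ∀ i, (‖x i‖ ^ p) ^ (2 / p) = ‖x i‖ ^ 2 := fun i => by
      rw [← Real.rpow_mul (norm_nonneg _), mul_div_cancel₀ _ (by positivity), Real.rpow_two]
    simpa only [hsq, card_univ, ← norm_sq_eq_of_L2 β (toLp 2 x)] using this
  rw [norm_eq_sum (by positivity)]
  calc S ^ (1 / p) = (S ^ (2 / p)) ^ (1 / 2 : ℝ) := by
        rw [← Real.rpow_mul hS]; congr 1; field_simp
    _ ≤ ((Fintype.card ι : ℝ) ^ (2 / p - 1) * ‖toLp 2 x‖ ^ 2) ^ (1 / 2 : ℝ) := by gcongr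
    _ = (Fintype.card ι : ℝ) ^ (1 / p - 1 / 2) * ‖toLp 2 x‖ := by
        rw [Real.mul_rpow (by positivity) (by positivity), ← Real.rpow_mul (by positivity),
          ← Real.rpow_two, ← Real.rpow_mul (norm_nonneg _), mul_one_div_cancel two_ne_zero,
          Real.rpow_one]
        congr 2
        ring

end PiLp

section Plane

variable {q : ℝ≥0∞} [Fact (1 ≤ q)]

theorem not_uniformSBPBp_piLp_two_of_two_le (hq : 2 ≤ q) :
    ¬ UniformSBPBp ℝ (PiLp 2 (fun _ : Fin 2 => ℝ)) (PiLp q (fun _ : Fin 2 => ℝ)) :=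
  not_uniformSBPBp_of_norm_attained_on_orthonormal
    (PiLp.congrExponent ℝ _ 2 q).toContinuousLinearMap
    (fun z => by simpa using PiLp.norm_toLp_le_norm_toLp_two hq (ofLp z))
    (u := PiLp.single 2 0 1) (v := PiLp.single 2 1 1) (by simp) (by simp)
    (by simp [PiLp.inner_apply]) (by simp [PiLp.ofLp_single, PiLp.toLp_single])
    (by simp [PiLp.ofLp_single, PiLp.toLp_single])

theorem not_uniformSBPBp_piLp_two_of_le_two (hq : q ≤ 2) :
    ¬ UniformSBPBp ℝ (PiLp 2 (fun _ : Fin 2 => ℝ)) (PiLp q (fun _ : Fin 2 => ℝ)) := by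
  have hq_top : q ≠ ∞ := (hq.trans_lt ENNReal.ofNat_lt_top).ne
  set b : ℝ := 2 ^ (-1 / 2 : ℝ)
  have hdiag : ∀ (r : ℝ≥0∞) [Fact (1 ≤ r)], r ≠ ∞ →
      ‖(toLp r (Function.const (Fin 2) b) : PiLp r (fun _ : Fin 2 => ℝ))‖ =
        2 ^ (1 / r.toReal - 1 / 2) := by
    intro r _ hr
    rw [PiLp.norm_toLp_const hr, Real.norm_of_nonneg (by positivity), Fintype.card_fin,
      ENNReal.toReal_div, ENNReal.toReal_one]
    push_cast
    rw [← Real.rpow_add two_pos]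
    ring_nf
  have hantidiag : ∀ (r : ℝ≥0∞) [Fact (1 ≤ r)],
      ‖(toLp r ![b, -b] : PiLp r (fun _ : Fin 2 => ℝ))‖ =
        ‖(toLp r (Function.const (Fin 2) b) : PiLp r (fun _ : Fin 2 => ℝ))‖ :=
    fun r _ => PiLp.norm_eq_of_forall_norm_eq fun i => by fin_cases i <;> simp
  set c : ℝ := 2 ^ (1 / 2 - 1 / q.toReal)
  have hc : c * 2 ^ (1 / q.toReal - 1 / 2) = 1 := by
    rw [← Real.rpow_add two_pos, sub_add_sub_cancel', sub_self, Real.rpow_zero]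
  have hc₀ : 0 ≤ c := by positivity
  refine not_uniformSBPBp_of_norm_attained_on_orthonormal
    (c • (PiLp.congrExponent ℝ _ 2 q).toContinuousLinearMap) (fun z => ?_)
    (u := toLp 2 (Function.const (Fin 2) b)) (v := toLp 2 ![b, -b]) ?_ ?_ ?_ ?_ ?_
  · calc ‖(c • (PiLp.congrExponent ℝ _ 2 q).toContinuousLinearMap) z‖
          = c * ‖(toLp q (ofLp z) : PiLp q (fun _ : Fin 2 => ℝ))‖ := by
            simp [norm_smul, Real.norm_of_nonneg hc₀]
        _ ≤ c * (2 ^ (1 / q.toReal - 1 / 2) * ‖z‖) := by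
            gcongr
            simpa using PiLp.norm_toLp_le_card_rpow_mul_norm_toLp_two hq (ofLp z)
        _ = ‖z‖ := by rw [← mul_assoc, hc, one_mul]
  · simpa using hdiag 2 (by simp)
  · simpa [hantidiag] using hdiag 2 (by simp)
  · simp [PiLp.inner_apply, Fin.sum_univ_two]
  · simpa [norm_smul, Real.norm_of_nonneg hc₀, hdiag q hq_top] using hc
  · simpa [norm_smul, Real.norm_of_nonneg hc₀, hantidiag, hdiag q hq_top] using hc

end Plane

theorem l2_lq_real_fails_uniform_sBPBp_general
    (q : ℝ≥0∞) [Fact (1 ≤ q)] :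
    ¬ UniformSBPBp ℝ (PiLp 2 (fun _ : Fin 2 => ℝ)) (PiLp q (fun _ : Fin 2 => ℝ)) := by
  rcases le_total 2 q with hq | hq
  · exact not_uniformSBPBp_piLp_two_of_two_le hq
  · exact not_uniformSBPBp_piLp_two_of_le_two hq

/-- For every `1 ≤ q ≤ ∞` the pair `(ℓ₂²(ℝ), ℓ_q²(ℝ))` fails the uniform
strong Bishop-Phelps-Bollobás property. -/
theorem l2_lq_real_fails_uniform_sBPBp
    (q : ℝ≥0∞) [Fact (1 ≤ q)] (hq : 1 ≤ q) :
    ¬ UniformSBPBp ℝ (PiLp 2 (fun _ : Fin 2 => ℝ)) (PiLp q (fun _ : Fin 2 => ℝ)) :=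
  l2_lq_real_fails_uniform_sBPBp_general q
end

section
/- For every p with 1 < p ≤ 2 and every q with 1 ≤ q ≤ 2, the pair (ℓ_p²(ℝ), ℓ_q²(ℝ)) fails the uniform strong Bishop-Phelps-Bollobás property. -/
open scoped ENNReal

/-!
For `0 ≤ b < 1` let `T_b (s, t) = 2^(-1/q) (s + b t, s - b t)`. The power-mean inequality
(`q ≤ 2`) and the monotonicity of `ℓ_p`-norms (`p ≤ 2`) give
`‖T_b x‖_q ≤ √(s² + b² t²) ≤ √(s² + t²) ≤ ‖x‖_p`, with equality at `e₀`, so `‖T_b‖ = 1`.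
If `‖x‖_p = ‖T_b x‖_q = 1`, the outer terms squeeze `(1 - b²) t² ≤ 0`, so `t = 0` and `x` is at
distance at least `1` from `e₁`. But `‖T_b e₁‖ = b` is as close to `1` as we like.
-/

local notation "ℓ²[" p "]" => PiLp p (fun _ : Fin 2 => ℝ)

lemma ENNReal.toReal_mem_Ioc_of_one_le_of_le_two {p : ℝ≥0∞} (hp1 : 1 ≤ p) (hp2 : p ≤ 2) :
    p.toReal ∈ Set.Ioc 0 2 := by
  have hp_top : p ≠ ∞ := ne_top_of_le_ne_top (by simp) hp2
  refine ⟨ENNReal.toReal_pos (zero_lt_one.trans_le hp1).ne' hp_top, ?_⟩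
  simpa using ENNReal.toReal_mono (by simp) hp2

lemma Real.rpow_mean_le_sqrt_mean {s a b : ℝ} (hs : 0 < s) (hs2 : s ≤ 2) (ha : 0 ≤ a)
    (hb : 0 ≤ b) : ((a ^ s + b ^ s) / 2) ^ (1 / s) ≤ √((a ^ 2 + b ^ 2) / 2) := by
  have hconv := (convexOn_rpow ((one_le_div hs).2 hs2)).2 (Set.mem_Ici.2 (rpow_nonneg ha s))
    (Set.mem_Ici.2 (rpow_nonneg hb s)) one_half_pos.le one_half_pos.le (add_halves 1)
  have hpow : ∀ {x : ℝ}, 0 ≤ x → (x ^ s) ^ (2 / s) = x ^ 2 := fun hx => by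
    rw [← rpow_mul hx, mul_div_cancel₀ _ hs.ne', rpow_two]
  simp only [smul_eq_mul, hpow ha, hpow hb] at hconv
  calc ((a ^ s + b ^ s) / 2) ^ (1 / s)
      = (((a ^ s + b ^ s) / 2) ^ (2 / s)) ^ (1 / 2 : ℝ) := by
        rw [← rpow_mul (by positivity)]; congr 1; field_simp
    _ ≤ ((a ^ 2 + b ^ 2) / 2) ^ (1 / 2 : ℝ) := by
        gcongr
        simpa only [add_div, one_div_mul_eq_div] using hconv
    _ = √((a ^ 2 + b ^ 2) / 2) := (sqrt_eq_rpow _).symm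

lemma PiLp.norm_fin_two_s14 {p : ℝ≥0∞} (hp : 0 < p.toReal) (x : ℓ²[p]) :
    ‖x‖ = (|x 0| ^ p.toReal + |x 1| ^ p.toReal) ^ (1 / p.toReal) := by
  simp [PiLp.norm_eq_sum hp, Fin.sum_univ_two, Real.norm_eq_abs]

lemma PiLp.norm_fin_two_of_abs_eq {q : ℝ≥0∞} (hq : 0 < q.toReal) {y : ℓ²[q]}
    (hy : |y 1| = |y 0|) : ‖y‖ = 2 ^ (1 / q.toReal) * |y 0| := by
  rw [norm_fin_two_s14 hq, hy, ← two_mul, Real.mul_rpow zero_le_two (by positivity), one_div,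
    Real.rpow_rpow_inv (abs_nonneg _) hq.ne']

lemma PiLp.sqrt_sq_add_sq_le_norm {p : ℝ≥0∞} (hp0 : 0 < p.toReal) (hp2 : p.toReal ≤ 2)
    (x : ℓ²[p]) : √(x 0 ^ 2 + x 1 ^ 2) ≤ ‖x‖ := by
  have h := NNReal.rpow_add_rpow_le ‖x 0‖₊ ‖x 1‖₊ hp0 hp2
  rw [norm_fin_two_s14 hp0, Real.sqrt_eq_rpow, ← sq_abs (x 0), ← sq_abs (x 1)]
  exact_mod_cast h

lemma PiLp.norm_le_rpow_mul_sqrt {q : ℝ≥0∞} (hq0 : 0 < q.toReal) (hq2 : q.toReal ≤ 2)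
    (y : ℓ²[q]) : ‖y‖ ≤ 2 ^ (1 / q.toReal) * √((y 0 ^ 2 + y 1 ^ 2) / 2) := by
  calc ‖y‖
      = 2 ^ (1 / q.toReal) * ((|y 0| ^ q.toReal + |y 1| ^ q.toReal) / 2) ^ (1 / q.toReal) := by
        rw [norm_fin_two_s14 hq0, ← Real.mul_rpow zero_le_two (by positivity),
          mul_div_cancel₀ _ two_ne_zero]
    _ ≤ 2 ^ (1 / q.toReal) * √((|y 0| ^ 2 + |y 1| ^ 2) / 2) := by
        gcongr; exact Real.rpow_mean_le_sqrt_mean hq0 hq2 (abs_nonneg _) (abs_nonneg _)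
    _ = 2 ^ (1 / q.toReal) * √((y 0 ^ 2 + y 1 ^ 2) / 2) := by simp only [sq_abs]

noncomputable def hadamardOp (p q : ℝ≥0∞) [Fact (1 ≤ p)] [Fact (1 ≤ q)] (b : ℝ) :
    ℓ²[p] →L[ℝ] ℓ²[q] :=
  LinearMap.toContinuousLinearMap
    ((WithLp.linearEquiv q ℝ (Fin 2 → ℝ)).symm.toLinearMap ∘ₗ
      Matrix.toLin' ((2 ^ (1 / q.toReal) : ℝ)⁻¹ • !![1, b; 1, -b]) ∘ₗ
        (WithLp.linearEquiv p ℝ (Fin 2 → ℝ)).toLinearMap)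

section hadamardOp

variable {p q : ℝ≥0∞} [Fact (1 ≤ p)] [Fact (1 ≤ q)]

lemma hadamardOp_apply (b : ℝ) (x : ℓ²[p]) :
    hadamardOp p q b x =
      (2 ^ (1 / q.toReal) : ℝ)⁻¹ • WithLp.toLp q ![x 0 + b * x 1, x 0 - b * x 1] := by
  ext i
  fin_cases i <;> simp [hadamardOp, dotProduct, Fin.sum_univ_two] <;> ring

lemma norm_hadamardOp_apply_le (hq : q ≤ 2) (b : ℝ) (x : ℓ²[p]) :
    ‖hadamardOp p q b x‖ ≤ √(x 0 ^ 2 + b ^ 2 * x 1 ^ 2) := by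
  obtain ⟨hq0, hq2⟩ := ENNReal.toReal_mem_Ioc_of_one_le_of_le_two Fact.out hq
  rw [hadamardOp_apply, norm_smul, norm_inv, Real.norm_of_nonneg (by positivity),
    inv_mul_le_iff₀ (by positivity)]
  calc _ ≤ _ := PiLp.norm_le_rpow_mul_sqrt hq0 hq2 _
    _ = _ := by
      congr 2
      simp only [Matrix.cons_val_zero, Matrix.cons_val_one]
      ring

lemma norm_hadamardOp_apply_le_norm (hp : p ≤ 2) (hq : q ≤ 2) {b : ℝ} (hb : |b| ≤ 1)
    (x : ℓ²[p]) : ‖hadamardOp p q b x‖ ≤ ‖x‖ := by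
  obtain ⟨hp0, hp2⟩ := ENNReal.toReal_mem_Ioc_of_one_le_of_le_two Fact.out hp
  calc _ ≤ √(x 0 ^ 2 + b ^ 2 * x 1 ^ 2) := norm_hadamardOp_apply_le hq b x
    _ ≤ √(x 0 ^ 2 + x 1 ^ 2) := by
        gcongr
        exact mul_le_of_le_one_left (sq_nonneg _) ((sq_le_one_iff_abs_le_one b).2 hb)
    _ ≤ ‖x‖ := PiLp.sqrt_sq_add_sq_le_norm hp0 hp2 x

lemma norm_hadamardOp_single_zero (hq : q ≤ 2) (b : ℝ) :
    ‖hadamardOp p q b (PiLp.single p 0 1)‖ = 1 := by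
  have hq0 := (ENNReal.toReal_mem_Ioc_of_one_le_of_le_two Fact.out hq).1
  have h2 : (0 : ℝ) < 2 ^ (1 / q.toReal) := by positivity
  rw [hadamardOp_apply, norm_smul, PiLp.norm_fin_two_of_abs_eq hq0 ?_,
    Real.norm_of_nonneg (inv_nonneg.2 h2.le), inv_mul_cancel_left₀ h2.ne'] <;> simp

lemma norm_hadamardOp_single_one (hq : q ≤ 2) (b : ℝ) :
    ‖hadamardOp p q b (PiLp.single p 1 1)‖ = |b| := by
  have hq0 := (ENNReal.toReal_mem_Ioc_of_one_le_of_le_two Fact.out hq).1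
  have h2 : (0 : ℝ) < 2 ^ (1 / q.toReal) := by positivity
  rw [hadamardOp_apply, norm_smul, PiLp.norm_fin_two_of_abs_eq hq0 ?_,
    Real.norm_of_nonneg (inv_nonneg.2 h2.le), inv_mul_cancel_left₀ h2.ne'] <;> simp

lemma opNorm_hadamardOp (hp : p ≤ 2) (hq : q ≤ 2) {b : ℝ} (hb : |b| ≤ 1) :
    ‖hadamardOp p q b‖ = 1 := by
  refine le_antisymm (ContinuousLinearMap.opNorm_le_bound _ zero_le_one fun x => ?_) ?_
  · simpa using norm_hadamardOp_apply_le_norm hp hq hb x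
  · simpa [norm_hadamardOp_single_zero hq] using
      (hadamardOp p q b).le_opNorm (PiLp.single p 0 1)

lemma apply_one_eq_zero_of_norm_hadamardOp_apply_eq_one (hp : p ≤ 2) (hq : q ≤ 2) {b : ℝ}
    (hb : |b| < 1) {x : ℓ²[p]} (hx : ‖x‖ = 1) (hTx : ‖hadamardOp p q b x‖ = 1) : x 1 = 0 := by
  obtain ⟨hp0, hp2⟩ := ENNReal.toReal_mem_Ioc_of_one_le_of_le_two Fact.out hp
  have hlow : 1 ≤ x 0 ^ 2 + b ^ 2 * x 1 ^ 2 :=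
    Real.one_le_sqrt.1 (hTx ▸ norm_hadamardOp_apply_le hq b x)
  have hup : x 0 ^ 2 + x 1 ^ 2 ≤ 1 :=
    Real.sqrt_le_one.1 (hx ▸ PiLp.sqrt_sq_add_sq_le_norm hp0 hp2 x)
  have hb2 : b ^ 2 < 1 := (sq_lt_one_iff_abs_lt_one b).2 hb
  have hx1 : x 1 ^ 2 ≤ 0 :=
    le_of_mul_le_mul_left (by linarith : (1 - b ^ 2) * x 1 ^ 2 ≤ (1 - b ^ 2) * 0) (by linarith)
  exact pow_eq_zero_iff two_ne_zero |>.1 (le_antisymm hx1 (sq_nonneg _))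

end hadamardOp

theorem lp_lq_real_fails_uniform_sBPBp_general
    (p q : ℝ≥0∞) [Fact (1 ≤ p)] [Fact (1 ≤ q)]
    (hp2 : p ≤ 2) (hq2 : q ≤ 2) :
    ¬ UniformSBPBp ℝ (PiLp p (fun _ : Fin 2 => ℝ)) (PiLp q (fun _ : Fin 2 => ℝ)) := by
  intro h
  obtain ⟨η, hη, H⟩ := h 1 one_pos
  set b := max 0 (1 - η / 2)
  have hb : |b| = b := abs_of_nonneg (le_max_left _ _)
  have hb1 : |b| < 1 := by rw [hb]; exact max_lt one_pos (by linarith)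
  have hbη : 1 - η < |b| := by rw [hb]; exact lt_max_of_lt_right (by linarith)
  set x₀ : ℓ²[p] := PiLp.single p 1 1
  obtain ⟨x₁, hx₁, hTx₁, hdist⟩ := H (hadamardOp p q b) (opNorm_hadamardOp hp2 hq2 hb1.le) x₀
    (by simp [x₀]) (by rwa [norm_hadamardOp_single_one hq2])
  have hx₁_one : x₁ 1 = 0 := apply_one_eq_zero_of_norm_hadamardOp_apply_eq_one hp2 hq2 hb1 hx₁ hTx₁
  have hx₁_far : 1 ≤ ‖x₁ - x₀‖ := by simpa [x₀, hx₁_one] using PiLp.norm_apply_le (x₁ - x₀) 1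
  linarith

/-- For every `1 < p ≤ 2` and `1 ≤ q ≤ 2` the pair `(ℓ_p²(ℝ), ℓ_q²(ℝ))` fails
the uniform strong Bishop-Phelps-Bollobás property. -/
theorem lp_lq_real_fails_uniform_sBPBp
    (p q : ℝ≥0∞) [Fact (1 ≤ p)] [Fact (1 ≤ q)]
    (hp1 : 1 < p) (hp2 : p ≤ 2) (hq1 : 1 ≤ q) (hq2 : q ≤ 2) :
    ¬ UniformSBPBp ℝ (PiLp p (fun _ : Fin 2 => ℝ)) (PiLp q (fun _ : Fin 2 => ℝ)) :=
  lp_lq_real_fails_uniform_sBPBp_general p q hp2 hq2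
end

section
/- Let X be a Banach space over 𝕜 (𝕜 = ℝ or ℂ) admitting a biorthogonal system of length two: there exist x₁, x₂ ∈ X with ‖x₁‖ = ‖x₂‖ = 1 and continuous linear functionals x₁*, x₂* on X with ‖x₁*‖ ≤ 1, ‖x₂*‖ ≤ 1 and x_i*(x_j) = δ_{ij} for i, j ∈ {1, 2}. Then the pair (X, ℓ_∞²) fails the uniform strong Bishop-Phelps-Bollobás property. -/
open scoped ENNReal

/-! For `0 ≤ c < 1` the operator `x ↦ (f₁ x, c • f₂ x)` into `ℓ_∞²` has norm `‖f₁‖ = 1`, and a unit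
vector `y` attains it only if `‖f₁ y‖ = 1`, which forces `‖y - x₂‖ ≥ ‖f₁ (y - x₂)‖ = 1` since `f₁ x₂ = 0`.
But `x₂` is almost norming: `‖T x₂‖ = c`, and `c` can be taken as close to `1` as we like.
So for `ε = 1` no `η` works. -/

section

variable {𝕜 X : Type*} [RCLike 𝕜] [NormedAddCommGroup X] [NormedSpace 𝕜 X]

noncomputable def linftyPair (f g : X →L[𝕜] 𝕜) : X →L[𝕜] PiLp ∞ (fun _ : Fin 2 => 𝕜) :=
  (PiLp.continuousLinearEquiv ∞ 𝕜 (fun _ : Fin 2 => 𝕜)).symm.toContinuousLinearMap.comp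
    (ContinuousLinearMap.pi ![f, g])

theorem norm_linftyPair_apply (f g : X →L[𝕜] 𝕜) (x : X) :
    ‖linftyPair f g x‖ = max ‖f x‖ ‖g x‖ := by
  simp [linftyPair, Pi.norm_def, Fin.univ_succ]

theorem norm_linftyPair (f g : X →L[𝕜] 𝕜) : ‖linftyPair f g‖ = max ‖f‖ ‖g‖ := by
  apply le_antisymm
  · refine (linftyPair f g).opNorm_le_bound (by positivity) fun x => ?_
    rw [norm_linftyPair_apply, max_mul_of_nonneg _ _ (norm_nonneg x)]
    exact max_le_max (f.le_opNorm x) (g.le_opNorm x)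
  · refine max_le (f.opNorm_le_bound (norm_nonneg _) fun x => ?_)
      (g.opNorm_le_bound (norm_nonneg _) fun x => ?_) <;>
    refine le_trans ?_ ((linftyPair f g).le_opNorm x) <;>
    simp [norm_linftyPair_apply]

theorem one_le_norm_sub_of_norm_linftyPair_apply_eq_one {f g : X →L[𝕜] 𝕜} (hf : ‖f‖ ≤ 1)
    (hg : ‖g‖ < 1) {x₀ y : X} (hfx₀ : f x₀ = 0) (hy : ‖y‖ = 1)
    (hTy : ‖linftyPair f g y‖ = 1) : 1 ≤ ‖y - x₀‖ := by
  have hgy : ‖g y‖ < 1 := (g.le_opNorm y).trans_lt (by rwa [hy, mul_one])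
  have hfy : ‖f y‖ = 1 := by
    rw [norm_linftyPair_apply, max_eq_iff] at hTy
    exact hTy.elim And.left fun h => absurd h.1 hgy.ne
  calc 1 = ‖f (y - x₀)‖ := by rw [map_sub, hfx₀, sub_zero, hfy]
    _ ≤ ‖f‖ * ‖y - x₀‖ := f.le_opNorm _
    _ ≤ ‖y - x₀‖ := mul_le_of_le_one_left (norm_nonneg _) hf

end

theorem biorthogonal_fails_uniform_sBPBp_linf_general
    (𝕜 : Type*) [RCLike 𝕜]
    (X : Type*) [NormedAddCommGroup X] [NormedSpace 𝕜 X]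
    (x₁ x₂ : X) (f₁ f₂ : X →L[𝕜] 𝕜)
    (hx₁ : ‖x₁‖ = 1) (hx₂ : ‖x₂‖ = 1) (hf₁ : ‖f₁‖ ≤ 1) (hf₂ : ‖f₂‖ ≤ 1)
    (h11 : f₁ x₁ = 1) (h12 : f₁ x₂ = 0) (h22 : f₂ x₂ = 1) :
    ¬ UniformSBPBp 𝕜 X (PiLp ∞ (fun _ : Fin 2 => 𝕜)) := by
  intro h
  obtain ⟨η, hη, hBPB⟩ := h 1 one_pos
  obtain ⟨c, hc₀, hc₁, hcη⟩ : ∃ c : ℝ, 0 ≤ c ∧ c < 1 ∧ 1 - η < c :=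
    ⟨max 0 (1 - η / 2), le_max_left _ _, max_lt one_pos (by linarith),
      lt_max_of_lt_right (by linarith)⟩
  have hnf₁ : ‖f₁‖ = 1 := le_antisymm hf₁ (by simpa [h11, hx₁] using f₁.le_opNorm x₁)
  have hnf₂ : ‖c • f₂‖ < 1 := by
    rw [norm_smul, Real.norm_of_nonneg hc₀]
    exact (mul_le_of_le_one_right hc₀ hf₂).trans_lt hc₁
  have hTx₂ : ‖linftyPair f₁ (c • f₂) x₂‖ = c := by
    simp [norm_linftyPair_apply, h12, h22, hc₀]
  obtain ⟨y, hy, hTy, hyx₂⟩ := hBPB (linftyPair f₁ (c • f₂))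
    (by rw [norm_linftyPair, hnf₁, max_eq_left hnf₂.le]) x₂ hx₂ (hcη.trans_eq hTx₂.symm)
  exact hyx₂.not_ge (one_le_norm_sub_of_norm_linftyPair_apply_eq_one hf₁ hnf₂ h12 hy hTy)

/-- If `X` admits a biorthogonal system of length two, then the pair
`(X, ℓ_∞²)` fails the uniform strong Bishop-Phelps-Bollobás property. -/
theorem biorthogonal_fails_uniform_sBPBp_linf
    (𝕜 : Type*) [RCLike 𝕜]
    (X : Type*) [NormedAddCommGroup X] [NormedSpace 𝕜 X] [CompleteSpace X]
    (x₁ x₂ : X) (f₁ f₂ : X →L[𝕜] 𝕜)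
    (hx₁ : ‖x₁‖ = 1) (hx₂ : ‖x₂‖ = 1) (hf₁ : ‖f₁‖ ≤ 1) (hf₂ : ‖f₂‖ ≤ 1)
    (h11 : f₁ x₁ = 1) (h12 : f₁ x₂ = 0) (h21 : f₂ x₁ = 0) (h22 : f₂ x₂ = 1) :
    ¬ UniformSBPBp 𝕜 X (PiLp ∞ (fun _ : Fin 2 => 𝕜)) :=
  biorthogonal_fails_uniform_sBPBp_linf_general 𝕜 X x₁ x₂ f₁ f₂ hx₁ hx₂ hf₁ hf₂ h11 h12 h22
end

section
/- Let Y be a 2-dimensional Banach space over 𝕜 (𝕜 = ℝ or ℂ), i.e., a complete normed 𝕜-vector space with finrank 𝕜 Y = 2. Then the pair (Y, Y) fails the uniform strong Bishop-Phelps-Bollobás property. -/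
/-!
Pick unit vectors `e` and `x₀` and a norm-one functional `f` with `f e = 1` and `f x₀ = 0`
(possible as soon as the dimension is at least two), and consider
`T = (1 - δ) • id + δ • (f ⊗ e)`. Then `‖T‖ = ‖T e‖ = 1` while `‖T x₀‖ = 1 - δ` is as close to
`1` as we like. But `‖T x‖ ≤ (1 - δ) ‖x‖ + δ ‖f x‖`, so every unit vector `x₁` at which `T`
attains its norm has `‖f x₁‖ = 1`, whence `‖x₁ - x₀‖ ≥ ‖f (x₁ - x₀)‖ = 1`.
-/

section

variable {𝕜 : Type*} [RCLike 𝕜] {Y : Type*} [NormedAddCommGroup Y] [NormedSpace 𝕜 Y]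

theorem StrongDual.exists_norm_eq_one_apply_eq_zero (hY : 1 < Module.rank 𝕜 Y)
    (f : StrongDual 𝕜 Y) : ∃ x : Y, ‖x‖ = 1 ∧ f x = 0 := by
  obtain ⟨w, hw, hfw⟩ : ∃ w : Y, w ≠ 0 ∧ f w = 0 := by
    by_contra! hker
    have hinj : Function.Injective (f : Y →ₗ[𝕜] 𝕜) :=
      (injective_iff_map_eq_zero _).2 fun w hfw => by_contra fun hw => hker w hw hfw
    have hrank := (f : Y →ₗ[𝕜] 𝕜).lift_rank_le_of_injective hinj
    rw [Module.rank_self, Cardinal.lift_one, Cardinal.lift_le_one_iff] at hrank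
    exact hrank.not_gt hY
  exact ⟨(‖w‖⁻¹ : 𝕜) • w, norm_smul_inv_norm hw, by simp [hfw]⟩

theorem exists_norm_eq_one_dual_pair_of_one_lt_rank (hY : 1 < Module.rank 𝕜 Y) :
    ∃ (e x₀ : Y) (f : StrongDual 𝕜 Y),
      ‖e‖ = 1 ∧ ‖x₀‖ = 1 ∧ ‖f‖ = 1 ∧ f e = 1 ∧ f x₀ = 0 := by
  have : Nontrivial Y := rank_pos_iff_nontrivial.1 (zero_lt_one.trans hY)
  obtain ⟨y, hy⟩ := exists_ne (0 : Y)
  set e : Y := (‖y‖⁻¹ : 𝕜) • y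
  have he : ‖e‖ = 1 := norm_smul_inv_norm hy
  obtain ⟨f, hf, hfe⟩ := exists_dual_vector 𝕜 e (by simp [he])
  obtain ⟨x₀, hx₀, hfx₀⟩ := f.exists_norm_eq_one_apply_eq_zero hY
  exact ⟨e, x₀, f, he, hx₀, hf, by simp [hfe, he], hfx₀⟩

noncomputable def convexCombIdSmulRight (f : StrongDual 𝕜 Y) (e : Y) (δ : ℝ) : Y →L[𝕜] Y :=
  ((1 - δ : ℝ) : 𝕜) • ContinuousLinearMap.id 𝕜 Y + (δ : 𝕜) • f.smulRight e

section convexCombIdSmulRight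

variable {f : StrongDual 𝕜 Y} {e x : Y} {δ : ℝ}

@[simp]
theorem convexCombIdSmulRight_apply :
    convexCombIdSmulRight f e δ x = ((1 - δ : ℝ) : 𝕜) • x + (δ : 𝕜) • f x • e := by
  simp [convexCombIdSmulRight]

theorem convexCombIdSmulRight_apply_of_apply_eq_zero (hx : f x = 0) :
    convexCombIdSmulRight f e δ x = ((1 - δ : ℝ) : 𝕜) • x := by
  simp [hx]

theorem norm_convexCombIdSmulRight_apply_le (he : ‖e‖ = 1) (hδ₀ : 0 ≤ δ) (hδ₁ : δ ≤ 1) :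
    ‖convexCombIdSmulRight f e δ x‖ ≤ (1 - δ) * ‖x‖ + δ * ‖f x‖ := by
  calc ‖convexCombIdSmulRight f e δ x‖
      ≤ ‖((1 - δ : ℝ) : 𝕜) • x‖ + ‖(δ : 𝕜) • f x • e‖ := by
        rw [convexCombIdSmulRight_apply]; exact norm_add_le _ _
    _ = (1 - δ) * ‖x‖ + δ * ‖f x‖ := by
        simp only [norm_smul, RCLike.norm_ofReal, he, mul_one, abs_of_nonneg hδ₀,
          abs_of_nonneg (sub_nonneg.2 hδ₁)]

theorem norm_convexCombIdSmulRight (he : ‖e‖ = 1) (hf : ‖f‖ ≤ 1) (hfe : f e = 1)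
    (hδ₀ : 0 ≤ δ) (hδ₁ : δ ≤ 1) : ‖convexCombIdSmulRight f e δ‖ = 1 := by
  refine le_antisymm (ContinuousLinearMap.opNorm_le_bound _ zero_le_one fun x => ?_) ?_
  · have hfx : ‖f x‖ ≤ ‖x‖ := f.le_of_opNorm_le hf x |>.trans_eq (one_mul _)
    have := norm_convexCombIdSmulRight_apply_le (f := f) (x := x) he hδ₀ hδ₁
    nlinarith
  · have hTe : convexCombIdSmulRight f e δ e = e := by
      rw [convexCombIdSmulRight_apply, hfe, one_smul, ← add_smul]
      norm_num
    simpa [hTe, he] using (convexCombIdSmulRight f e δ).le_opNorm e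

theorem one_le_norm_apply_of_norm_convexCombIdSmulRight_apply_eq_one (he : ‖e‖ = 1)
    (hδ₀ : 0 < δ) (hδ₁ : δ ≤ 1) (hx : ‖x‖ = 1) (hTx : ‖convexCombIdSmulRight f e δ x‖ = 1) :
    1 ≤ ‖f x‖ := by
  have := norm_convexCombIdSmulRight_apply_le (f := f) (x := x) he hδ₀.le hδ₁
  rw [hTx, hx] at this
  nlinarith

end convexCombIdSmulRight

theorem not_uniformSBPBp_self_of_one_lt_rank (hY : 1 < Module.rank 𝕜 Y) :
    ¬ UniformSBPBp 𝕜 Y Y := by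
  obtain ⟨e, x₀, f, he, hx₀, hf, hfe, hfx₀⟩ := exists_norm_eq_one_dual_pair_of_one_lt_rank hY
  intro hBPB
  obtain ⟨η, hη, hattain⟩ := hBPB 1 one_pos
  obtain ⟨δ, hδ₀, hδη, hδ₁⟩ : ∃ δ : ℝ, 0 < δ ∧ δ < η ∧ δ ≤ 1 :=
    ⟨min η 1 / 2, by positivity, by linarith [min_le_left η 1], by linarith [min_le_right η 1]⟩
  have hTx₀ : ‖convexCombIdSmulRight f e δ x₀‖ = 1 - δ := by
    rw [convexCombIdSmulRight_apply_of_apply_eq_zero hfx₀, norm_smul, RCLike.norm_ofReal, hx₀,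
      mul_one, abs_of_nonneg (by linarith)]
  obtain ⟨x₁, hx₁, hTx₁, hclose⟩ := hattain _ (norm_convexCombIdSmulRight he hf.le hfe hδ₀.le hδ₁)
    x₀ hx₀ (by linarith)
  have hfx₁ := one_le_norm_apply_of_norm_convexCombIdSmulRight_apply_eq_one he hδ₀ hδ₁ hx₁ hTx₁
  have hfar : 1 ≤ ‖x₁ - x₀‖ :=
    calc 1 ≤ ‖f (x₁ - x₀)‖ := by rwa [map_sub, hfx₀, sub_zero]
      _ ≤ ‖x₁ - x₀‖ := f.le_of_opNorm_le hf.le _ |>.trans_eq (one_mul _)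
  linarith

end

theorem two_dimensional_fails_uniform_sBPBp_general
    (𝕜 : Type*) [RCLike 𝕜]
    (Y : Type*) [NormedAddCommGroup Y] [NormedSpace 𝕜 Y]
    (hY : Module.finrank 𝕜 Y = 2) :
    ¬ UniformSBPBp 𝕜 Y Y :=
  not_uniformSBPBp_self_of_one_lt_rank <| by
    exact_mod_cast Module.lt_rank_of_lt_finrank (n := 1) (by omega)

/-- If `Y` is a `2`-dimensional Banach space, then the pair `(Y, Y)` fails
the uniform strong Bishop-Phelps-Bollobás property. -/
theorem two_dimensional_fails_uniform_sBPBp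
    (𝕜 : Type*) [RCLike 𝕜]
    (Y : Type*) [NormedAddCommGroup Y] [NormedSpace 𝕜 Y] [CompleteSpace Y]
    (hY : Module.finrank 𝕜 Y = 2) :
    ¬ UniformSBPBp 𝕜 Y Y :=
  two_dimensional_fails_uniform_sBPBp_general 𝕜 Y hY
end

section
/- For 𝕜 = ℝ or ℂ, the pair (ℓ₂, ℓ₂²) fails the uniform strong Bishop-Phelps-Bollobás property, where ℓ₂ is the Hilbert space of square-summable scalar sequences and ℓ₂² is 𝕜² with the euclidean norm. -/
theorem not_uniformSBPBp_of_forall {𝕜 : Type*} [RCLike 𝕜] {X Y : Type*} [NormedAddCommGroup X]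
    [NormedSpace 𝕜 X] [NormedAddCommGroup Y] [NormedSpace 𝕜 Y] {ε : ℝ} (hε : 0 < ε)
    (h : ∀ η > 0, ∃ T : X →L[𝕜] Y, ‖T‖ = 1 ∧ ∃ x₀ : X, ‖x₀‖ = 1 ∧ 1 - η < ‖T x₀‖ ∧
      ∀ x₁ : X, ‖x₁‖ = 1 → ‖T x₁‖ = 1 → ε ≤ ‖x₁ - x₀‖) :
    ¬ UniformSBPBp 𝕜 X Y := by
  intro hU
  obtain ⟨η, hη, hU⟩ := hU ε hε
  obtain ⟨T, hT, x₀, hx₀, hTx₀, hfar⟩ := h η hη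
  obtain ⟨x₁, hx₁, hTx₁, hclose⟩ := hU T hT x₀ hx₀ hTx₀
  exact (hfar x₁ hx₁ hTx₁).not_gt hclose

open scoped ENNReal

theorem lp.sq_norm_apply_add_sq_norm_apply_le {ι : Type*} {E : ι → Type*}
    [∀ i, NormedAddCommGroup (E i)] (x : lp E 2) {i j : ι} (hij : i ≠ j) :
    ‖x i‖ ^ 2 + ‖x j‖ ^ 2 ≤ ‖x‖ ^ 2 := by
  classical
  have h := lp.sum_rpow_le_norm_rpow (p := 2) (by norm_num) x {i, j}
  rw [Finset.sum_pair hij] at h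
  simpa only [ENNReal.toReal_ofNat, Real.rpow_two] using h

theorem lp.one_le_norm_sub_single_of_apply_eq_zero {ι : Type*} [DecidableEq ι] {𝕜 : Type*}
    [NormedField 𝕜] {p : ℝ≥0∞} [Fact (1 ≤ p)] {x : lp (fun _ : ι => 𝕜) p} {j : ι} (hj : x j = 0) :
    1 ≤ ‖x - lp.single p j 1‖ := by
  have hp : p ≠ 0 := (zero_lt_one.trans_le Fact.out).ne'
  have h := lp.norm_apply_le_norm hp (x - lp.single p j 1) j
  rw [lp.coeFn_sub, Pi.sub_apply, hj, lp.single_apply_self, zero_sub] at h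
  simpa using h

section

variable (𝕜 : Type*) [RCLike 𝕜] {ι : Type*}

noncomputable def scaledCoordPair (i j : ι) (s : ℝ) :
    lp (fun _ : ι => 𝕜) 2 →L[𝕜] PiLp 2 (fun _ : Fin 2 => 𝕜) :=
  (PiLp.continuousLinearEquiv 2 𝕜 _).symm.toContinuousLinearMap ∘L
    ContinuousLinearMap.pi ![lp.evalCLM 𝕜 _ 2 i, s • lp.evalCLM 𝕜 _ 2 j]

variable {𝕜}

theorem sq_norm_scaledCoordPair (i j : ι) (s : ℝ) (x : lp (fun _ : ι => 𝕜) 2) :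
    ‖scaledCoordPair 𝕜 i j s x‖ ^ 2 = ‖x i‖ ^ 2 + s ^ 2 * ‖x j‖ ^ 2 := by
  simp [scaledCoordPair, PiLp.norm_sq_eq_of_L2, Fin.sum_univ_two, lp.evalCLM, norm_smul, mul_pow]

variable {i j : ι} {s : ℝ}

theorem norm_scaledCoordPair_le (hij : i ≠ j) (hs : s ^ 2 ≤ 1) (x : lp (fun _ : ι => 𝕜) 2) :
    ‖scaledCoordPair 𝕜 i j s x‖ ≤ ‖x‖ := by
  refine (pow_le_pow_iff_left₀ (norm_nonneg _) (norm_nonneg _) two_ne_zero).1 ?_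
  calc ‖scaledCoordPair 𝕜 i j s x‖ ^ 2 = ‖x i‖ ^ 2 + s ^ 2 * ‖x j‖ ^ 2 :=
        sq_norm_scaledCoordPair i j s x
    _ ≤ ‖x i‖ ^ 2 + ‖x j‖ ^ 2 := by gcongr; exact mul_le_of_le_one_left (by positivity) hs
    _ ≤ ‖x‖ ^ 2 := lp.sq_norm_apply_add_sq_norm_apply_le x hij

theorem apply_eq_zero_of_norm_scaledCoordPair_eq (hij : i ≠ j) (hs : s ^ 2 < 1)
    {x : lp (fun _ : ι => 𝕜) 2} (hx : ‖scaledCoordPair 𝕜 i j s x‖ = ‖x‖) : x j = 0 := by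
  have h := lp.sq_norm_apply_add_sq_norm_apply_le x hij
  rw [← hx, sq_norm_scaledCoordPair] at h
  have : ‖x j‖ ^ 2 = 0 := by nlinarith [sq_nonneg ‖x j‖]
  simpa using this

variable [DecidableEq ι]

theorem norm_scaledCoordPair_single_left (hij : i ≠ j) :
    ‖scaledCoordPair 𝕜 i j s (lp.single 2 i 1)‖ = 1 := by
  rw [← pow_left_inj₀ (norm_nonneg _) zero_le_one two_ne_zero, sq_norm_scaledCoordPair]
  simp [hij.symm]

theorem norm_scaledCoordPair_single_right (hij : i ≠ j) :
    ‖scaledCoordPair 𝕜 i j s (lp.single 2 j 1)‖ = |s| := by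
  rw [← pow_left_inj₀ (norm_nonneg _) (abs_nonneg s) two_ne_zero, sq_norm_scaledCoordPair]
  simp [hij]

theorem opNorm_scaledCoordPair (hij : i ≠ j) (hs : s ^ 2 ≤ 1) :
    ‖scaledCoordPair 𝕜 i j s‖ = 1 := by
  refine le_antisymm (ContinuousLinearMap.opNorm_le_bound _ zero_le_one fun x => ?_) ?_
  · simpa using norm_scaledCoordPair_le hij hs x
  · simpa [norm_scaledCoordPair_single_left hij, lp.norm_single] using
      (scaledCoordPair 𝕜 i j s).le_opNorm (lp.single 2 i 1)

end

/-- The pair `(ℓ₂, ℓ₂²)` fails the uniform strong Bishop-Phelps-Bollobás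
property. -/
theorem l2_seq_l2_two_fails_uniform_sBPBp
    (𝕜 : Type*) [RCLike 𝕜] :
    ¬ UniformSBPBp 𝕜 (lp (fun _ : ℕ => 𝕜) 2) (PiLp 2 (fun _ : Fin 2 => 𝕜)) := by
  refine not_uniformSBPBp_of_forall one_pos fun η hη => ?_
  obtain ⟨s, hs0, hs1, hsη⟩ : ∃ s : ℝ, 0 ≤ s ∧ s < 1 ∧ 1 - η < s :=
    ⟨max 0 (1 - η / 2), le_max_left _ _, max_lt one_pos (by linarith),
      lt_max_of_lt_right (by linarith)⟩
  have h01 : (0 : ℕ) ≠ 1 := zero_ne_one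
  have hs : s ^ 2 < 1 := pow_lt_one₀ hs0 hs1 two_ne_zero
  refine ⟨scaledCoordPair 𝕜 0 1 s, opNorm_scaledCoordPair h01 hs.le, lp.single 2 1 1,
    by simp [lp.norm_single], ?_, fun x₁ hx₁ hTx₁ => ?_⟩
  · rwa [norm_scaledCoordPair_single_right h01, abs_of_nonneg hs0]
  · exact lp.one_le_norm_sub_single_of_apply_eq_zero
      (apply_eq_zero_of_norm_scaledCoordPair_eq h01 hs (hTx₁.trans hx₁.symm))
end

section
/- Let X and Y be Banach spaces over 𝕜 (𝕜 = ℝ or ℂ). If the pair (X, Y) fails the uniform strong Bishop-Phelps-Bollobás property, then the pair (ℓ₂(X), ℓ_∞(Y)) fails the strong Bishop-Phelps-Bollobás property, where ℓ₂(X) is the space of sequences in X with square-summable norms and ℓ_∞(Y) is the space of bounded sequences in Y with the sup-norm. -/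
/-!
Failure of the uniform property yields `ε > 0` and, for each `n`, a norm-one operator `Tₙ` and a
unit vector `xₙ` with `‖Tₙ xₙ‖ > 1 - 1/(n+1)` but no norm-attaining unit vector of `Tₙ` within `ε`
of `xₙ`. The diagonal operator `T = (Tₙ)ₙ : ℓ₂(X) → ℓ_∞(Y)` has norm one. A unit vector of `ℓ₂(X)`
at which `T` attains its norm must put all its mass on one coordinate `m`, where `Tₘ` attains its
norm; if it is within `1` of `xₙ` placed at coordinate `n`, then `m = n`. So the strong property
for `T` at the vectors `xₙ` with large `n` would contradict the choice of `Tₙ` and `xₙ`.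
-/

open scoped ENNReal

/-- A pair of Banach spaces `(X, Y)` has the strong Bishop-Phelps-Bollobás property. -/
def SBPBp (𝕜 : Type*) [RCLike 𝕜] (X Y : Type*) [NormedAddCommGroup X] [NormedSpace 𝕜 X]
    [NormedAddCommGroup Y] [NormedSpace 𝕜 Y] : Prop :=
  ∀ ε : ℝ, 0 < ε → ∀ T : X →L[𝕜] Y, ‖T‖ = 1 →
    ∃ η : ℝ, 0 < η ∧ ∀ x₀ : X, ‖x₀‖ = 1 → 1 - η < ‖T x₀‖ →
      ∃ x₁ : X, ‖x₁‖ = 1 ∧ ‖T x₁‖ = 1 ∧ ‖x₁ - x₀‖ < ε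

namespace lp

variable {ι : Type*} {E F : ι → Type*} [∀ i, NormedAddCommGroup (E i)]
  [∀ i, NormedAddCommGroup (F i)]

theorem norm_apply_sq_add_norm_apply_sq_le (f : lp E 2) {i j : ι} (hij : i ≠ j) :
    ‖f i‖ ^ 2 + ‖f j‖ ^ 2 ≤ ‖f‖ ^ 2 := by
  classical
  have := sum_rpow_le_norm_rpow (by norm_num) f {i, j}
  rw [Finset.sum_pair hij] at this
  have h2 : (2 : ℝ≥0∞).toReal = (2 : ℕ) := by norm_num
  simpa only [h2, Real.rpow_natCast] using this

variable {𝕜 : Type*} [NontriviallyNormedField 𝕜] [∀ i, NormedSpace 𝕜 (E i)]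
  [∀ i, NormedSpace 𝕜 (F i)] {p : ℝ≥0∞} [Fact (1 ≤ p)]

theorem norm_apply_le_mul_norm (T : ∀ i, E i →L[𝕜] F i) {C : ℝ} (hT : ∀ i, ‖T i‖ ≤ C)
    (hC : 0 ≤ C) (f : lp E p) (i : ι) : ‖T i (f i)‖ ≤ C * ‖f‖ :=
  ((T i).le_opNorm _).trans <|
    mul_le_mul (hT i) (norm_apply_le_norm (zero_lt_one.trans_le Fact.out).ne' f i)
      (norm_nonneg _) hC

variable (p) in
noncomputable def diagonalCLM (T : ∀ i, E i →L[𝕜] F i) {C : ℝ} (hT : ∀ i, ‖T i‖ ≤ C)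
    (hC : 0 ≤ C) : lp E p →L[𝕜] lp F ∞ :=
  LinearMap.mkContinuous
    { toFun := fun f => ⟨fun i => T i (f i),
        memℓp_infty ⟨C * ‖f‖, by rintro - ⟨i, rfl⟩; exact norm_apply_le_mul_norm T hT hC f i⟩⟩
      map_add' := fun f g => by ext i; simp only [coeFn_add, Pi.add_apply, map_add]
      map_smul' := fun c f => by ext i; simp only [coeFn_smul, Pi.smul_apply, map_smul]; rfl }
    C fun f => norm_le_of_forall_le (by positivity) (norm_apply_le_mul_norm T hT hC f)

@[simp]
theorem diagonalCLM_apply (T : ∀ i, E i →L[𝕜] F i) {C : ℝ} (hT : ∀ i, ‖T i‖ ≤ C) (hC : 0 ≤ C)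
    (f : lp E p) (i : ι) : diagonalCLM p T hT hC f i = T i (f i) :=
  rfl

theorem norm_diagonalCLM_le (T : ∀ i, E i →L[𝕜] F i) {C : ℝ} (hT : ∀ i, ‖T i‖ ≤ C)
    (hC : 0 ≤ C) : ‖diagonalCLM p T hT hC‖ ≤ C :=
  LinearMap.mkContinuous_norm_le _ hC _

theorem norm_le_norm_diagonalCLM [DecidableEq ι] (T : ∀ i, E i →L[𝕜] F i) {C : ℝ}
    (hT : ∀ i, ‖T i‖ ≤ C) (hC : 0 ≤ C) (i : ι) : ‖T i‖ ≤ ‖diagonalCLM p T hT hC‖ := by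
  refine (T i).opNorm_le_bound (norm_nonneg _) fun x => ?_
  calc ‖T i x‖ = ‖diagonalCLM p T hT hC (lp.single p i x) i‖ := by simp
    _ ≤ ‖diagonalCLM p T hT hC (lp.single p i x)‖ := norm_apply_le_norm ENNReal.top_ne_zero _ i
    _ ≤ ‖diagonalCLM p T hT hC‖ * ‖x‖ := by
      simpa [lp.norm_single (zero_lt_one.trans_le Fact.out)] using
        (diagonalCLM p T hT hC).le_opNorm (lp.single p i x)

theorem exists_norm_apply_eq_one_of_norm_diagonalCLM_apply_eq_one (T : ∀ i, E i →L[𝕜] F i)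
    (hT : ∀ i, ‖T i‖ ≤ 1) {f : lp E 2} (hf : ‖f‖ = 1)
    (hTf : ‖diagonalCLM 2 T hT zero_le_one f‖ = 1) : ∃ i, ‖f i‖ = 1 ∧ ‖T i (f i)‖ = 1 := by
  have hle : ∀ i, ‖T i (f i)‖ ≤ ‖f i‖ := fun i =>
    ((T i).le_opNorm _).trans (mul_le_of_le_one_left (norm_nonneg _) (hT i))
  -- Since `2 * (3 / 4) ^ 2 > 1`, at most one coordinate of a unit vector of `ℓ₂` exceeds `3 / 4`.
  obtain ⟨i, hi⟩ : ∃ i, 3 / 4 < ‖T i (f i)‖ := by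
    by_contra! h
    have := norm_le_of_forall_le (f := diagonalCLM 2 T hT zero_le_one f) (by norm_num) h
    linarith
  have hsmall : ∀ j ≠ i, ‖T j (f j)‖ ≤ 3 / 4 := fun j hj => by
    have := norm_apply_sq_add_norm_apply_sq_le f hj.symm
    nlinarith [hle i, hle j, norm_nonneg (f j)]
  have hTi : 1 ≤ ‖T i (f i)‖ := by
    by_contra! h
    have : ‖diagonalCLM 2 T hT zero_le_one f‖ ≤ max ‖T i (f i)‖ (3 / 4) :=
      norm_le_of_forall_le (by positivity) fun j => by
        rcases eq_or_ne j i with rfl | hj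
        · exact le_max_left _ _
        · exact le_max_of_le_right (hsmall j hj)
    linarith [max_lt h (show (3 / 4 : ℝ) < 1 by norm_num)]
  have hfi : ‖f i‖ ≤ 1 := hf ▸ norm_apply_le_norm two_ne_zero f i
  exact ⟨i, by linarith [hle i], by linarith [hle i]⟩

end lp

theorem lp_sum_fails_sBPBp_of_fails_uniform_sBPBp_general
    (𝕜 : Type*) [RCLike 𝕜]
    (X : Type*) [NormedAddCommGroup X] [NormedSpace 𝕜 X]
    (Y : Type*) [NormedAddCommGroup Y] [NormedSpace 𝕜 Y]
    (h : ¬ UniformSBPBp 𝕜 X Y) :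
    ¬ SBPBp 𝕜 (lp (fun _ : ℕ => X) 2) (lp (fun _ : ℕ => Y) ∞) := by
  intro hs
  unfold UniformSBPBp at h
  push Not at h
  obtain ⟨ε, hε, hfail⟩ := h
  choose T hT x hx hTx hfar using fun n : ℕ => hfail (1 / (n + 1)) (by positivity)
  set A := lp.diagonalCLM 2 T (fun n => (hT n).le) zero_le_one
  have hA : ‖A‖ = 1 :=
    le_antisymm (lp.norm_diagonalCLM_le _ _ _) (hT 0 ▸ lp.norm_le_norm_diagonalCLM _ _ _ 0)
  obtain ⟨η, hη, hgood⟩ := hs (min ε 1) (by positivity) A hA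
  obtain ⟨n, hn⟩ := exists_nat_one_div_lt hη
  set x₀ : lp (fun _ : ℕ => X) 2 := lp.single 2 n (x n)
  have hAx₀ : ‖T n (x n)‖ ≤ ‖A x₀‖ := by
    simpa [A, x₀] using lp.norm_apply_le_norm ENNReal.top_ne_zero (A x₀) n
  obtain ⟨x₁, hx₁, hAx₁, hclose⟩ := hgood x₀ (by simp [x₀, hx]) (by linarith [hTx n])
  obtain ⟨m, hx₁m, hTm⟩ :=
    lp.exists_norm_apply_eq_one_of_norm_diagonalCLM_apply_eq_one T _ hx₁ hAx₁
  have hdist : ∀ k, ‖x₁ k - x₀ k‖ < min ε 1 := fun k =>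
    (lp.norm_apply_le_norm two_ne_zero (x₁ - x₀) k).trans_lt hclose
  obtain rfl : m = n := by
    by_contra hmn
    simpa [x₀, hmn, hx₁m] using hdist m
  have : ‖x₁ m - x m‖ < ε := by simpa [x₀] using (hdist m).trans_le (min_le_left _ _)
  exact (hfar m (x₁ m) hx₁m hTm).not_gt this

/-- If the pair `(X, Y)` fails the uniform strong Bishop-Phelps-Bollobás
property, then the pair `(ℓ₂(X), ℓ_∞(Y))` fails the strong Bishop-Phelps-Bollobás
property. -/
theorem lp_sum_fails_sBPBp_of_fails_uniform_sBPBp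
    (𝕜 : Type*) [RCLike 𝕜]
    (X : Type*) [NormedAddCommGroup X] [NormedSpace 𝕜 X] [CompleteSpace X]
    (Y : Type*) [NormedAddCommGroup Y] [NormedSpace 𝕜 Y] [CompleteSpace Y]
    (h : ¬ UniformSBPBp 𝕜 X Y) :
    ¬ SBPBp 𝕜 (lp (fun _ : ℕ => X) 2) (lp (fun _ : ℕ => Y) ∞) :=
  lp_sum_fails_sBPBp_of_fails_uniform_sBPBp_general 𝕜 X Y h
end
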